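/- arXiv:2002.09807 — 4 statements merged into one kernel-verified Lean document; each statement's English description precedes it below -/
import Mathlib

section
/- Let E be a finite ground set, M ⊆ 2^E a downward-closed family of feasible sets, and (B_1,…,B_T) a fixed ordered partition of E into batches. Suppose the weight vectors w^1,…,w^T of the batches are mutually independent, each w^t drawn from a finitely supported distribution D_t on ℝ^{B_t}, and let OPT(w) be a fixed (deterministic) maximizer of the total weight w(S)=∑_{e∈S} w_e over S ∈ M. Define the sampling scheme R = (R_1,…,R_T) by: independently for each t, draw fresh weights ŵ^{(t)} ~ ∏_{s≠t} D_s and set R_t = B_t ∩ OPT(w^t, ŵ^{(t)}). THEOREM (reduction from batched prophet inequality to batched OCRS): if ALG is a c-selectable batched OCRS with respect to this sampling scheme, then the online algorithm that at each time t observes w^t, draws ŵ^{(t)} ~ ∏_{s≠t} D_s, computes R_t = B_t ∩ OPT(w^t, ŵ^{(t)}), and feeds R_t to ALG to obtain I_t ⊆ R_t, outputs a feasible set I = ⊔_{t∈[T]} I_t satisfying E[w(I)] ≥ c · E[w(OPT(w))]. -/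
/-!
Fix a batch `t` and an element `e ∈ B t`. Batch `t`'s part of the sample (its actual draw
`w^t` and its resampled vector `ŵ^{(t)}`) is independent of the rest, and
`R_t = B_t ∩ OPT(w^t, ŵ^{(t)})` depends only on that part. Every other `R_s` depends only on
batch `s`'s part. So, once `R_t = S` is fixed, whether `e` is selected does not depend on
batch `t`'s part. Hence `E[w_e; e ∈ I_t, R_t = S] = E[w_e; e ∈ R_t, R_t = S] · P(e ∈ I_t | R_t = S)`,
and `c`-selectability gives `E[w_e; e ∈ I_t] ≥ c · E[w_e; e ∈ R_t]`, because `w_e ≥ 0` on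
`e ∈ OPT`. Since `(w^t, ŵ^{(t)})` has the same law as `w`, the right-hand side equals
`c · E[w_e; e ∈ OPT(w)]`. Summing over `t` and `e ∈ B t` proves the theorem.
-/

open Finset

open Classical in
/-- Probability of the event `P` under the (finitely supported) mass function `mass`. -/
noncomputable def prOf {Ω : Type*} [Fintype Ω] (mass : Ω → ℝ) (P : Ω → Prop) : ℝ :=
  ∑ ω, if P ω then mass ω else 0

/-- Expectation of `f` under the (finitely supported) mass function `mass`. -/
noncomputable def expOf {Ω : Type*} [Fintype Ω] (mass : Ω → ℝ) (f : Ω → ℝ) : ℝ :=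
  ∑ ω, mass ω * f ω

section PiMass

variable {ι : Type*} [DecidableEq ι] {β : ι → Type*}

theorem update_piSplitAt_symm (i : ι) (a c : β i) (r : ∀ j : {j // j ≠ i}, β j) :
    Function.update ((Equiv.piSplitAt i β).symm (c, r)) i a
      = (Equiv.piSplitAt i β).symm (a, r) := by
  ext j
  by_cases h : j = i
  · subst h; simp [Equiv.piSplitAt_symm_apply]
  · simp [Equiv.piSplitAt_symm_apply, h]

variable [Fintype ι]

def piMass (p : ∀ i, β i → ℝ) (b : ∀ i, β i) : ℝ := ∏ i, p i (b i)

theorem piMass_piSplitAt_symm (p : ∀ i, β i → ℝ) (i : ι) (a : β i)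
    (r : ∀ j : {j // j ≠ i}, β j) :
    piMass p ((Equiv.piSplitAt i β).symm (a, r))
      = p i a * piMass (fun j : {j // j ≠ i} => p j) r := by
  simp only [piMass]
  rw [Fintype.prod_eq_mul_prod_subtype_ne _ i]
  simp only [Equiv.piSplitAt_symm_apply, dite_true]
  exact congrArg _ (prod_congr rfl fun j _ => by rw [dif_neg j.2])

variable [∀ i, Fintype (β i)]

theorem sum_piMass (p : ∀ i, β i → ℝ) (hp : ∀ i, ∑ a, p i a = 1) : ∑ b, piMass p b = 1 := by
  unfold piMass
  rw [← Fintype.prod_sum]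
  simp [hp]

theorem sum_piSplitAt {M : Type*} [AddCommMonoid M] (i : ι) (g : (∀ j, β j) → M) :
    ∑ b, g b = ∑ a, ∑ r, g ((Equiv.piSplitAt i β).symm (a, r)) := by
  rw [← Fintype.sum_prod_type']
  exact Fintype.sum_equiv (Equiv.piSplitAt i β) _ _
    fun b => congrArg g ((Equiv.piSplitAt i β).symm_apply_apply b).symm

theorem sum_sum_mul_piMass_update (p : ∀ i, β i → ℝ) (i : ι) (hp : ∑ a, p i a = 1)
    (φ : (∀ j, β j) → ℝ) :
    ∑ a, ∑ b, p i a * piMass p b * φ (Function.update b i a) = ∑ b, piMass p b * φ b := by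
  set P := piMass (fun j : {j // j ≠ i} => p j)
  calc ∑ a, ∑ b, p i a * piMass p b * φ (Function.update b i a)
      = ∑ a, ∑ c, p i c * ∑ r, p i a * P r * φ ((Equiv.piSplitAt i β).symm (a, r)) := by
        refine sum_congr rfl fun a _ => ?_
        simp only [sum_piSplitAt i (fun b => p i a * piMass p b * _), piMass_piSplitAt_symm,
          update_piSplitAt_symm, mul_sum, P]
        ring_nf
    _ = ∑ a, ∑ r, p i a * P r * φ ((Equiv.piSplitAt i β).symm (a, r)) := by
        simp only [← sum_mul, hp, one_mul]
    _ = ∑ b, piMass p b * φ b := by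
        simp only [sum_piSplitAt i (fun b => piMass p b * φ b), piMass_piSplitAt_symm, P]

end PiMass

theorem expOf_equiv {Ω Ω' : Type*} [Fintype Ω] [Fintype Ω'] (e : Ω ≃ Ω') (m : Ω → ℝ)
    (f : Ω → ℝ) : expOf m f = expOf (fun p => m (e.symm p)) (fun p => f (e.symm p)) :=
  (e.symm.sum_comp _).symm

theorem prOf_equiv {Ω Ω' : Type*} [Fintype Ω] [Fintype Ω'] (e : Ω ≃ Ω') (m : Ω → ℝ)
    (P : Ω → Prop) : prOf m P = prOf (fun p => m (e.symm p)) (fun p => P (e.symm p)) :=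
  (e.symm.sum_comp _).symm

theorem expOf_sum {Ω κ : Type*} [Fintype Ω] (m : Ω → ℝ) (s : Finset κ) (f : κ → Ω → ℝ) :
    expOf m (fun ω => ∑ k ∈ s, f k ω) = ∑ k ∈ s, expOf m (f k) := by
  simp only [expOf, mul_sum]
  exact sum_comm

section ProductSpace

variable {Z Y : Type*} [Fintype Z] [Fintype Y] (q : Z → ℝ) (r : Y → ℝ)

theorem expOf_prod (f : Z × Y → ℝ) :
    expOf (fun p : Z × Y => q p.1 * r p.2) f = ∑ z, q z * ∑ y, r y * f (z, y) := by
  simp only [expOf, Fintype.sum_prod_type, mul_sum, mul_assoc]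

theorem expOf_prod_fst (f : Z → ℝ) :
    expOf (fun p : Z × Y => q p.1 * r p.2) (fun p => f p.1) = (∑ z, q z * f z) * ∑ y, r y := by
  rw [expOf_prod, sum_mul]
  exact sum_congr rfl fun z _ => by dsimp only; rw [← sum_mul]; ring

open Classical in
theorem prOf_prod_and_eq_mul (A : Z → Prop) (B : Z × Y → Prop) (z₀ : Z)
    (hB : ∀ z y, B (z, y) ↔ B (z₀, y)) :
    prOf (fun p : Z × Y => q p.1 * r p.2) (fun p => B p ∧ A p.1)
      = (∑ z, if A z then q z else 0) * ∑ y, if B (z₀, y) then r y else 0 := by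
  simp only [prOf, Fintype.sum_prod_type]
  rw [sum_mul_sum]
  refine sum_congr rfl fun z _ => sum_congr rfl fun y _ => ?_
  by_cases hA : A z <;> by_cases hB₀ : B (z₀, y) <;> simp [hA, hB₀, hB z y]

open Classical in
/-- For each `z` with `V z > 0`, the hypothesis at `S = ρ z` reads
`c * ∑ r ≤ ∑ y, r y * [sel (ρ z) (z, y)]` after cancelling the mass of the fibre `ρ⁻¹(ρ z)`,
so the bound holds pointwise in `z`. -/
theorem mul_expOf_le_expOf_of_selectable (hq : ∀ z, 0 ≤ q z) {σ : Type*} (ρ : Z → σ)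
    (V : Z → ℝ) (hV : ∀ z, 0 ≤ V z) (sel : σ → Z × Y → Prop)
    (hsel_indep : ∀ S z z' y, sel S (z, y) ↔ sel S (z', y)) (c : ℝ)
    (hsel : ∀ z, 0 < V z →
      c * prOf (fun p : Z × Y => q p.1 * r p.2) (fun p => ρ p.1 = ρ z) ≤
        prOf (fun p : Z × Y => q p.1 * r p.2) (fun p => sel (ρ z) p ∧ ρ p.1 = ρ z)) :
    c * expOf (fun p : Z × Y => q p.1 * r p.2) (fun p => V p.1) ≤
      expOf (fun p : Z × Y => q p.1 * r p.2) (fun p => if sel (ρ p.1) p then V p.1 else 0) := by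
  set selProb : Z → ℝ := fun z => ∑ y, if sel (ρ z) (z, y) then r y else 0
  set fiberMass : Z → ℝ := fun z => ∑ z', if ρ z' = ρ z then q z' else 0
  have hpointwise : ∀ z, c * (q z * V z * ∑ y, r y) ≤ q z * V z * selProb z := by
    intro z
    rcases (mul_nonneg (hq z) (hV z)).eq_or_lt with h0 | hpos
    · simp [← h0]
    have hfiber : q z ≤ fiberMass z :=
      (if_pos rfl).symm.trans_le (single_le_sum (f := fun z' => if ρ z' = ρ z then q z' else 0)
        (fun z' _ => by split_ifs <;> simp [hq]) (mem_univ z))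
    have hfpos : 0 < fiberMass z := (pos_of_mul_pos_left hpos (hV z)).trans_le hfiber
    have hc : c * ∑ y, r y ≤ selProb z := by
      have h := hsel z (pos_of_mul_pos_right hpos (hq z))
      have hall := prOf_prod_and_eq_mul q r (fun z' => ρ z' = ρ z) (fun _ => True) z
        fun _ _ => Iff.rfl
      simp only [true_and, if_true] at hall
      rw [hall, prOf_prod_and_eq_mul q r (fun z' => ρ z' = ρ z) (sel (ρ z)) z
        fun z' y => hsel_indep _ z' z y, mul_left_comm] at h
      exact le_of_mul_le_mul_left h hfpos
    calc c * (q z * V z * ∑ y, r y) = q z * V z * (c * ∑ y, r y) := by ring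
      _ ≤ q z * V z * selProb z := mul_le_mul_of_nonneg_left hc hpos.le
  calc c * expOf (fun p : Z × Y => q p.1 * r p.2) (fun p => V p.1)
      = ∑ z, c * (q z * V z * ∑ y, r y) := by rw [expOf_prod_fst, sum_mul, mul_sum]
    _ ≤ ∑ z, q z * V z * selProb z := sum_le_sum fun z _ => hpointwise z
    _ = _ := by
      rw [expOf_prod]
      refine sum_congr rfl fun z _ => ?_
      simp only [selProb, mul_assoc, mul_sum]
      refine sum_congr rfl fun y _ => ?_
      split_ifs <;> ring

end ProductSpace

section SplitAt

variable {ι : Type*} [DecidableEq ι]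

def Equiv.prodPiSplitAt (i : ι) (α β : ι → Type*) (γ : Type*) :
    (∀ j, α j) × (∀ j, β j) × γ ≃
      (α i × β i) × ((∀ j : {j // j ≠ i}, α j) × (∀ j : {j // j ≠ i}, β j)) × γ where
  toFun ω := ((ω.1 i, ω.2.1 i), (fun j => ω.1 j, fun j => ω.2.1 j), ω.2.2)
  invFun p := ((Equiv.piSplitAt i α).symm (p.1.1, p.2.1.1),
    (Equiv.piSplitAt i β).symm (p.1.2, p.2.1.2), p.2.2)
  left_inv ω := by
    simp only [← Equiv.piSplitAt_apply, Equiv.symm_apply_apply]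
  right_inv p := by
    have hα := (Equiv.piSplitAt i α).apply_symm_apply (p.1.1, p.2.1.1)
    have hβ := (Equiv.piSplitAt i β).apply_symm_apply (p.1.2, p.2.1.2)
    simp only [Equiv.piSplitAt_apply, Prod.mk.injEq] at hα hβ
    exact Prod.ext (Prod.ext hα.1 hβ.1) (Prod.ext (Prod.ext hα.2 hβ.2) rfl)

variable {α β : ι → Type*} {γ : Type*}

theorem Equiv.prodPiSplitAt_symm_slot (i : ι)
    (p : (α i × β i) × ((∀ j : {j // j ≠ i}, α j) × (∀ j : {j // j ≠ i}, β j)) × γ) :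
    (((Equiv.prodPiSplitAt i α β γ).symm p).1 i, ((Equiv.prodPiSplitAt i α β γ).symm p).2.1 i)
      = p.1 := by
  simp [Equiv.prodPiSplitAt, Equiv.piSplitAt_symm_apply]

theorem Equiv.prodPiSplitAt_symm_slot_of_ne {i j : ι} (h : j ≠ i)
    (p : (α i × β i) × ((∀ j : {j // j ≠ i}, α j) × (∀ j : {j // j ≠ i}, β j)) × γ) :
    (((Equiv.prodPiSplitAt i α β γ).symm p).1 j, ((Equiv.prodPiSplitAt i α β γ).symm p).2.1 j)
      = (p.2.1.1 ⟨j, h⟩, p.2.1.2 ⟨j, h⟩) := by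
  simp [Equiv.prodPiSplitAt, Equiv.piSplitAt_symm_apply, h]

theorem Equiv.update_prodPiSplitAt_symm_slotwise {X : ι → Type*} (F : ∀ j, α j × β j → X j)
    (i : ι) (S : X i) (z z' : α i × β i)
    (y : ((∀ j : {j // j ≠ i}, α j) × (∀ j : {j // j ≠ i}, β j)) × γ) :
    Function.update (fun j => F j (((Equiv.prodPiSplitAt i α β γ).symm (z, y)).1 j,
        ((Equiv.prodPiSplitAt i α β γ).symm (z, y)).2.1 j)) i S
      = Function.update (fun j => F j (((Equiv.prodPiSplitAt i α β γ).symm (z', y)).1 j,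
        ((Equiv.prodPiSplitAt i α β γ).symm (z', y)).2.1 j)) i S := by
  funext j
  by_cases h : j = i
  · subst h; simp only [Function.update_self]
  · simp only [Function.update_of_ne h, Equiv.prodPiSplitAt_symm_slot_of_ne h]

end SplitAt

section Resampling

variable {ι : Type*} [Fintype ι] {Ωt : ι → Type*} {Θ : Type*} (μ : ∀ i, Ωt i → ℝ) (ν : Θ → ℝ)

/-- The law of `(w, (ŵ^{(i)})_i, θ)`: the actual draw `ω.1`, for every batch `i` an
independent full redraw `ω.2.1 i` (only its coordinates `≠ i` are used), and the internal
randomness `ω.2.2`. -/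
def resamplingMass (ω : (∀ i, Ωt i) × (ι → ∀ j, Ωt j) × Θ) : ℝ :=
  piMass μ ω.1 * piMass (fun _ => piMass μ) ω.2.1 * ν ω.2.2

def slotMass (i : ι) (z : Ωt i × ∀ j, Ωt j) : ℝ := μ i z.1 * piMass μ z.2

theorem slotMass_nonneg (hμ : ∀ i a, 0 ≤ μ i a) (i : ι) (z : Ωt i × ∀ j, Ωt j) :
    0 ≤ slotMass μ i z :=
  mul_nonneg (hμ i z.1) (prod_nonneg fun j _ => hμ j _)

variable [DecidableEq ι]

def restMass (i : ι) (y : ((∀ j : {j // j ≠ i}, Ωt j) × ({j // j ≠ i} → ∀ j, Ωt j)) × Θ) : ℝ :=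
  piMass (fun j : {j // j ≠ i} => μ j) y.1.1 * piMass (fun _ => piMass μ) y.1.2 * ν y.2

variable (Ωt Θ) in
abbrev resamplingSplit (i : ι) :=
  Equiv.prodPiSplitAt i Ωt (fun _ => ∀ j, Ωt j) Θ

theorem resamplingMass_resamplingSplit_symm (i : ι) (p : (Ωt i × (∀ j, Ωt j)) ×
    ((∀ j : {j // j ≠ i}, Ωt j) × ({j // j ≠ i} → ∀ j, Ωt j)) × Θ) :
    resamplingMass μ ν ((resamplingSplit Ωt Θ i).symm p)
      = slotMass μ i p.1 * restMass μ ν i p.2 := by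
  simp only [resamplingMass, slotMass, restMass, Equiv.prodPiSplitAt, Equiv.coe_fn_symm_mk,
    piMass_piSplitAt_symm]
  ring

variable [∀ i, Fintype (Ωt i)] [Fintype Θ]

theorem sum_restMass (hμ : ∀ i, ∑ a, μ i a = 1) (hν : ∑ θ, ν θ = 1) (i : ι) :
    ∑ y, restMass μ ν i y = 1 := by
  simp only [restMass, Fintype.sum_prod_type, ← sum_mul, ← mul_sum, hν,
    sum_piMass (fun _ => piMass μ) fun _ => sum_piMass μ hμ,
    sum_piMass (fun j : {j // j ≠ i} => μ j) fun j => hμ j]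
  norm_num

theorem expOf_resamplingMass_eq_expOf_prod (i : ι)
    (f : (∀ i, Ωt i) × (ι → ∀ j, Ωt j) × Θ → ℝ) :
    expOf (resamplingMass μ ν) f
      = expOf (fun p => slotMass μ i p.1 * restMass μ ν i p.2)
          (fun p => f ((resamplingSplit Ωt Θ i).symm p)) := by
  simp only [expOf_equiv (resamplingSplit Ωt Θ i) (resamplingMass μ ν),
    resamplingMass_resamplingSplit_symm]

theorem prOf_resamplingMass_eq_prOf_prod (i : ι)
    (P : (∀ i, Ωt i) × (ι → ∀ j, Ωt j) × Θ → Prop) :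
    prOf (resamplingMass μ ν) P
      = prOf (fun p => slotMass μ i p.1 * restMass μ ν i p.2)
          (fun p => P ((resamplingSplit Ωt Θ i).symm p)) := by
  simp only [prOf_equiv (resamplingSplit Ωt Θ i) (resamplingMass μ ν),
    resamplingMass_resamplingSplit_symm]

theorem expOf_resamplingMass_fst (hμ : ∀ i, ∑ a, μ i a = 1) (hν : ∑ θ, ν θ = 1) (i : ι)
    (φ : (∀ i, Ωt i) → ℝ) :
    expOf (resamplingMass μ ν) (fun ω => φ ω.1)
      = ∑ z, slotMass μ i z * φ (Function.update z.2 i z.1) := by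
  calc expOf (resamplingMass μ ν) (fun ω => φ ω.1)
      = ∑ x, piMass μ x * φ x * ((∑ y, piMass (fun _ => piMass μ) y) * ∑ θ, ν θ) := by
        simp only [expOf, resamplingMass, Fintype.sum_prod_type]
        refine sum_congr rfl fun x _ => ?_
        rw [sum_mul_sum, mul_sum]
        refine sum_congr rfl fun y _ => ?_
        rw [mul_sum]
        exact sum_congr rfl fun θ _ => by ring
    _ = ∑ a, ∑ b, μ i a * piMass μ b * φ (Function.update b i a) := by
        rw [sum_piMass (fun _ => piMass μ) fun _ => sum_piMass μ hμ, hν,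
          sum_sum_mul_piMass_update μ i (hμ i)]
        simp
    _ = ∑ z, slotMass μ i z * φ (Function.update z.2 i z.1) := (Fintype.sum_prod_type' _).symm

theorem mul_sum_slotMass_le_expOf_selected {E : Type*} [DecidableEq E] (hμ0 : ∀ i a, 0 ≤ μ i a)
    (hμ1 : ∀ i, ∑ a, μ i a = 1) (hν1 : ∑ θ, ν θ = 1)
    (R : (∀ i, Ωt i) × (ι → ∀ j, Ωt j) × Θ → ι → Finset E)
    (ρ : ∀ i, Ωt i × (∀ j, Ωt j) → Finset E) (hR : ∀ ω j, R ω j = ρ j (ω.1 j, ω.2.1 j))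
    (alg : Θ → (ι → Finset E) → ι → Finset E) (i : ι) (e : E)
    (V : Ωt i × (∀ j, Ωt j) → ℝ) (hV : ∀ z, 0 ≤ V z) (c : ℝ)
    (hsel : ∀ z, 0 < V z →
      c * prOf (resamplingMass μ ν) (fun ω => R ω i = ρ i z) ≤
        prOf (resamplingMass μ ν) (fun ω => e ∈ alg ω.2.2 (R ω) i ∧ R ω i = ρ i z)) :
    c * ∑ z, slotMass μ i z * V z ≤
      expOf (resamplingMass μ ν) (fun ω =>
        if e ∈ alg ω.2.2 (R ω) i then V (ω.1 i, ω.2.1 i) else 0) := by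
  have hRi : ∀ p, R ((resamplingSplit Ωt Θ i).symm p) i = ρ i p.1 := fun p => by
    rw [hR, Equiv.prodPiSplitAt_symm_slot]
  have hupd : ∀ p, Function.update (R ((resamplingSplit Ωt Θ i).symm p)) i (ρ i p.1)
      = R ((resamplingSplit Ωt Θ i).symm p) := fun p => by
    rw [← hRi, Function.update_eq_self]
  have hRfun : ∀ ω, R ω = fun j => ρ j (ω.1 j, ω.2.1 j) := fun ω => funext (hR ω)
  -- does not depend on `p.1`, since the sets of the other batches ignore batch `i`'s draws
  set sel : Finset E → _ → Prop := fun S p =>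
    e ∈ alg p.2.2 (Function.update (R ((resamplingSplit Ωt Θ i).symm p)) i S) i
  calc c * ∑ z, slotMass μ i z * V z
      = c * expOf (fun p : (Ωt i × (∀ j, Ωt j)) × _ => slotMass μ i p.1 * restMass μ ν i p.2)
          (fun p => V p.1) := by
        rw [expOf_prod_fst, sum_restMass μ ν hμ1 hν1, mul_one]
    _ ≤ _ := by
        refine (mul_expOf_le_expOf_of_selectable (slotMass μ i) (restMass μ ν i)
          (slotMass_nonneg μ hμ0 i) (ρ i) V hV sel
          (fun S z z' y => by
            simp only [sel, hRfun, Equiv.update_prodPiSplitAt_symm_slotwise ρ i S z z' y])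
          c fun z hz => ?_).trans_eq ?_
        · have h := hsel z hz
          rw [prOf_resamplingMass_eq_prOf_prod μ ν i, prOf_resamplingMass_eq_prOf_prod μ ν i] at h
          simp only [hRi] at h
          convert h using 3 with p
          refine and_congr_left fun hρ => ?_
          simp only [sel, ← hρ, hupd]
          rfl
        · rw [expOf_resamplingMass_eq_expOf_prod μ ν i]
          congr 1
          funext p
          simp only [sel, hupd, Equiv.prodPiSplitAt_symm_slot]
          rfl

end Resampling

theorem nonneg_of_mem_of_forall_sum_le {E : Type*} [DecidableEq E] {M : Set (Finset E)}
    (hM : ∀ S ∈ M, ∀ S' ⊆ S, S' ∈ M) {S : Finset E} (hS : S ∈ M) {w : E → ℝ}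
    (hmax : ∀ S' ∈ M, ∑ e ∈ S', w e ≤ ∑ e ∈ S, w e) {e : E} (he : e ∈ S) : 0 ≤ w e := by
  have h := hmax _ (hM S hS _ (S.erase_subset e))
  rw [← sum_erase_add _ _ he] at h
  linarith

section Batches

variable {ι E : Type*} [Fintype ι] [DecidableEq E] {B : ι → Finset E}

theorem sum_ite_mem_eq_of_mem (hB : ∀ e, ∃! i, e ∈ B i) {e : E} {i : ι} (he : e ∈ B i)
    (g : ι → ℝ) : ∑ j, (if e ∈ B j then g j else 0) = g i := by
  rw [Fintype.sum_eq_single i fun j hj => if_neg fun h => hj ((hB e).unique h he), if_pos he]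

variable [Fintype E]

theorem sum_eq_sum_sum_ite (hB : ∀ e, ∃! i, e ∈ B i) (C : Finset E) (f : E → ℝ) :
    ∑ e ∈ C, f e = ∑ i, ∑ e ∈ B i, if e ∈ C then f e else 0 := by
  calc ∑ e ∈ C, f e = ∑ e, if e ∈ C then f e else 0 := by
        rw [sum_ite_mem, univ_inter]
    _ = ∑ e, ∑ i, if e ∈ B i then (if e ∈ C then f e else 0) else 0 := by
        refine sum_congr rfl fun e _ => ?_
        obtain ⟨i, hi, -⟩ := hB e
        rw [sum_ite_mem_eq_of_mem hB hi (fun _ => if e ∈ C then f e else 0)]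
    _ = ∑ i, ∑ e ∈ B i, if e ∈ C then f e else 0 := by
        rw [sum_comm]
        simp only [sum_ite_mem, univ_inter]

theorem sum_biUnion_eq_sum_sum_ite (hB : ∀ e, ∃! i, e ∈ B i) (I : ι → Finset E)
    (hI : ∀ i, I i ⊆ B i) (f : E → ℝ) :
    ∑ e ∈ univ.biUnion I, f e = ∑ i, ∑ e ∈ B i, if e ∈ I i then f e else 0 := by
  rw [sum_eq_sum_sum_ite hB]
  refine sum_congr rfl fun i _ => sum_congr rfl fun e he => ?_
  have hmem : e ∈ univ.biUnion I ↔ e ∈ I i := by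
    simp only [mem_biUnion, mem_univ, true_and]
    exact ⟨fun ⟨j, hj⟩ => (hB e).unique (hI j hj) he ▸ hj, fun h => ⟨i, h⟩⟩
  simp only [hmem]

end Batches

theorem mul_expOf_mem_opt_le_expOf_mem_selected {ι : Type*} [Fintype ι] [DecidableEq ι]
    {Ωt : ι → Type*} [∀ i, Fintype (Ωt i)] {Θ : Type*} [Fintype Θ] {E : Type*} [DecidableEq E]
    (μ : ∀ i, Ωt i → ℝ) (hμ0 : ∀ i a, 0 ≤ μ i a) (hμ1 : ∀ i, ∑ a, μ i a = 1)
    (ν : Θ → ℝ) (hν1 : ∑ θ, ν θ = 1) (B : ι → Finset E) (OPT : (E → ℝ) → Finset E)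
    (hOPT : ∀ v, ∀ e ∈ OPT v, 0 ≤ v e) (w : (∀ i, Ωt i) → E → ℝ)
    (R : (∀ i, Ωt i) × (ι → ∀ j, Ωt j) × Θ → ι → Finset E)
    (hR : ∀ ω j, R ω j = B j ∩ OPT (w (Function.update (ω.2.1 j) j (ω.1 j))))
    (alg : Θ → (ι → Finset E) → ι → Finset E) (hsub : ∀ ω i, alg ω.2.2 (R ω) i ⊆ R ω i)
    (c : ℝ) (i : ι) (e : E) (he : e ∈ B i) (hwe : ∀ x x', x i = x' i → w x e = w x' e)
    (hsel : ∀ S ⊆ B i, e ∈ S →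
      prOf (resamplingMass μ ν) (fun ω => e ∈ alg ω.2.2 (R ω) i ∧ R ω i = S) ≥
        c * prOf (resamplingMass μ ν) (fun ω => R ω i = S)) :
    c * expOf (resamplingMass μ ν) (fun ω => if e ∈ OPT (w ω.1) then w ω.1 e else 0) ≤
      expOf (resamplingMass μ ν) (fun ω => if e ∈ alg ω.2.2 (R ω) i then w ω.1 e else 0) := by
  set ρ : ∀ j, Ωt j × (∀ k, Ωt k) → Finset E :=
    fun j z => B j ∩ OPT (w (Function.update z.2 j z.1))
  set V : Ωt i × (∀ k, Ωt k) → ℝ :=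
    fun z => if e ∈ ρ i z then w (Function.update z.2 i z.1) e else 0
  have hV : ∀ z, 0 ≤ V z := fun z => by
    by_cases h : e ∈ ρ i z
    · simpa only [V, if_pos h] using hOPT _ e (mem_inter.1 h).2
    · simp only [V, if_neg h, le_refl]
  have hV_pos : ∀ z, 0 < V z → e ∈ ρ i z := fun z hz => by
    by_contra h
    simp only [V, if_neg h, lt_self_iff_false] at hz
  calc c * expOf (resamplingMass μ ν) (fun ω => if e ∈ OPT (w ω.1) then w ω.1 e else 0)
      = c * ∑ z, slotMass μ i z * V z := by
        rw [expOf_resamplingMass_fst μ ν hμ1 hν1 i (fun x => if e ∈ OPT (w x) then w x e else 0)]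
        simp only [V, ρ, mem_inter, he, true_and]
    _ ≤ expOf (resamplingMass μ ν)
          (fun ω => if e ∈ alg ω.2.2 (R ω) i then V (ω.1 i, ω.2.1 i) else 0) :=
        mul_sum_slotMass_le_expOf_selected μ ν hμ0 hμ1 hν1 R ρ hR alg i e V hV c
          fun z hz => hsel (ρ i z) inter_subset_left (hV_pos z hz)
    _ = expOf (resamplingMass μ ν) (fun ω => if e ∈ alg ω.2.2 (R ω) i then w ω.1 e else 0) := by
        congr 1
        funext ω
        by_cases hI : e ∈ alg ω.2.2 (R ω) i
        · have hρ : e ∈ ρ i (ω.1 i, ω.2.1 i) := (hR ω i).subst (motive := (e ∈ ·)) (hsub ω i hI)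
          simp only [hI, if_true, V, hρ]
          exact hwe _ _ (Function.update_self ..)
        · simp only [hI, if_false]

open Classical in
theorem batched_prophet_inequality_from_batched_OCRS_general
    {E : Type*} [Fintype E] [DecidableEq E] {T : ℕ}
    (M : Set (Finset E))
    (hM : ∀ S ∈ M, ∀ S' ⊆ S, S' ∈ M)
    (B : Fin T → Finset E)
    (hB : ∀ e : E, ∃! t : Fin T, e ∈ B t)
    (Ωt : Fin T → Type) [∀ t, Fintype (Ωt t)]
    (μ : ∀ t, Ωt t → ℝ)
    (hμ0 : ∀ t o, 0 ≤ μ t o) (hμ1 : ∀ t, ∑ o, μ t o = 1)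
    (wt : ∀ t, Ωt t → E → ℝ)
    (OPT : (E → ℝ) → Finset E)
    (hOPTmem : ∀ w, OPT w ∈ M)
    (hOPTmax : ∀ w : E → ℝ, ∀ S ∈ M, ∑ e ∈ S, w e ≤ ∑ e ∈ OPT w, w e)
    (Θ : Type) [Fintype Θ]
    (ν : Θ → ℝ) (hν1 : ∑ θ, ν θ = 1)
    (alg : Θ → (Fin T → Finset E) → Fin T → Finset E)
    (c : ℝ)
    -- the actual weight vector, as a function of the batch randomness
    (w : (∀ t, Ωt t) → E → ℝ)
    (hw : ∀ ω e, w ω e = ∑ t, if e ∈ B t then wt t (ω t) e else 0)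
    -- the sampling scheme `R`, using fresh resampled weights for the other batches
    (R : ((∀ t, Ωt t) × (∀ _ : Fin T, ∀ s, Ωt s) × Θ) → Fin T → Finset E)
    (hR : ∀ ω t, R ω t = B t ∩ OPT (fun e =>
      ∑ s, if e ∈ B s then (if s = t then wt s (ω.1 s) e else wt s (ω.2.1 t s) e) else 0))
    -- the joint mass of actual weights, resampled weights, and internal randomness
    (mass : ((∀ t, Ωt t) × (∀ _ : Fin T, ∀ s, Ωt s) × Θ) → ℝ)
    (hmass : ∀ ω, mass ω =
      (∏ t, μ t (ω.1 t)) * (∏ t, ∏ s, μ s (ω.2.1 t s)) * ν ω.2.2)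
    -- `alg` is a batched OCRS with respect to the sampling scheme `R`
    (hsub : ∀ ω t, alg ω.2.2 (R ω) t ⊆ R ω t)
    (hfeas : ∀ ω, (Finset.univ.biUnion fun t => alg ω.2.2 (R ω) t) ∈ M)
    -- `alg` is `c`-selectable
    (hsel : ∀ (t : Fin T) (S : Finset E), S ⊆ B t → ∀ e ∈ S,
      prOf mass (fun ω => e ∈ alg ω.2.2 (R ω) t ∧ R ω t = S) ≥
        c * prOf mass (fun ω => R ω t = S)) :
    (∀ ω, (Finset.univ.biUnion fun t => alg ω.2.2 (R ω) t) ∈ M) ∧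
    expOf mass
        (fun ω => ∑ e ∈ Finset.univ.biUnion (fun t => alg ω.2.2 (R ω) t), w ω.1 e)
      ≥ c * expOf mass (fun ω => ∑ e ∈ OPT (w ω.1), w ω.1 e) := by
  refine ⟨hfeas, ?_⟩
  obtain rfl : mass = resamplingMass μ ν := funext hmass
  have hR' : ∀ ω t, R ω t = B t ∩ OPT (w (Function.update (ω.2.1 t) t (ω.1 t))) := by
    intro ω t
    rw [hR]
    congr 2
    funext e
    rw [hw]
    refine sum_congr rfl fun s _ => ?_
    by_cases h : s = t
    · subst h; simp
    · simp [h]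
  have hIB : ∀ ω t, alg ω.2.2 (R ω) t ⊆ B t := fun ω t =>
    (hsub ω t).trans (hR' ω t ▸ inter_subset_left)
  have hwe : ∀ t e, e ∈ B t → ∀ x x' : ∀ t, Ωt t, x t = x' t → w x e = w x' e :=
    fun t e he x x' h => by
      rw [hw, hw, sum_ite_mem_eq_of_mem hB he, sum_ite_mem_eq_of_mem hB he, h]
  simp only [sum_biUnion_eq_sum_sum_ite hB _ (hIB _), sum_eq_sum_sum_ite hB (OPT _), expOf_sum,
    ge_iff_le, mul_sum]
  exact sum_le_sum fun t _ => sum_le_sum fun e he =>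
    mul_expOf_mem_opt_le_expOf_mem_selected μ hμ0 hμ1 ν hν1 B OPT
      (fun v _ he => nonneg_of_mem_of_forall_sum_le hM (hOPTmem v) (hOPTmax v) he) w R hR' alg
      hsub c t e he (hwe t e he) fun S hS => hsel t S hS e

open Classical in
/-- Reduction from batched prophet inequality to batched OCRS (Theorem 2.3 in the paper).

Setting: `E` is a finite ground set, `M` a downward-closed family of feasible subsets,
`B 0, …, B (T-1)` an ordered partition of `E` into batches.  The weight vectors of the
batches are mutually independent: the weights of batch `t` are `wt t o` for a sample
`o : Ωt t` drawn with probability `μ t o`.  `OPT` is a fixed deterministic maximizer of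
total weight over `M`.

The sample space is `(∀ t, Ωt t) × (∀ t s, Ωt s) × Θ`: the first component carries the
actual weights `w`, the second the fresh resampled weights `ŵ^{(t)}` used to define the
sampling scheme `R ω t = B t ∩ OPT(w^t, ŵ^{(t)})`, and `Θ` (with mass `ν`) is the internal
randomness of the online selection algorithm `alg`, which at time `t` sees only
`R ω 1, …, R ω t` (hypothesis `halgOnline`), selects `I_t ⊆ R_t` (hypothesis `hsub`) so
that `⊔_t I_t ∈ M` always (hypothesis `hfeas`), and is `c`-selectable:
`P(e ∈ I_t ∧ R_t = S) ≥ c · P(R_t = S)` for all `t`, `S ⊆ B t`, `e ∈ S` (hypothesis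
`hsel`).

Conclusion: the composed online algorithm outputs a feasible set `I = ⊔_t I_t` with
`E[w(I)] ≥ c · E[w(OPT(w))]`. -/
theorem batched_prophet_inequality_from_batched_OCRS
    {E : Type*} [Fintype E] [DecidableEq E] {T : ℕ}
    (M : Set (Finset E))
    (hM : ∀ S ∈ M, ∀ S' ⊆ S, S' ∈ M)
    (B : Fin T → Finset E)
    (hB : ∀ e : E, ∃! t : Fin T, e ∈ B t)
    (Ωt : Fin T → Type) [∀ t, Fintype (Ωt t)]
    (μ : ∀ t, Ωt t → ℝ)
    (hμ0 : ∀ t o, 0 ≤ μ t o) (hμ1 : ∀ t, ∑ o, μ t o = 1)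
    (wt : ∀ t, Ωt t → E → ℝ)
    (OPT : (E → ℝ) → Finset E)
    (hOPTmem : ∀ w, OPT w ∈ M)
    (hOPTmax : ∀ w : E → ℝ, ∀ S ∈ M, ∑ e ∈ S, w e ≤ ∑ e ∈ OPT w, w e)
    (Θ : Type) [Fintype Θ]
    (ν : Θ → ℝ) (hν0 : ∀ θ, 0 ≤ ν θ) (hν1 : ∑ θ, ν θ = 1)
    (alg : Θ → (Fin T → Finset E) → Fin T → Finset E)
    (halgOnline : ∀ θ r r' (t : Fin T), (∀ s ≤ t, r s = r' s) → alg θ r t = alg θ r' t)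
    (c : ℝ)
    -- the actual weight vector, as a function of the batch randomness
    (w : (∀ t, Ωt t) → E → ℝ)
    (hw : ∀ ω e, w ω e = ∑ t, if e ∈ B t then wt t (ω t) e else 0)
    -- the sampling scheme `R`, using fresh resampled weights for the other batches
    (R : ((∀ t, Ωt t) × (∀ _ : Fin T, ∀ s, Ωt s) × Θ) → Fin T → Finset E)
    (hR : ∀ ω t, R ω t = B t ∩ OPT (fun e =>
      ∑ s, if e ∈ B s then (if s = t then wt s (ω.1 s) e else wt s (ω.2.1 t s) e) else 0))
    -- the joint mass of actual weights, resampled weights, and internal randomness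
    (mass : ((∀ t, Ωt t) × (∀ _ : Fin T, ∀ s, Ωt s) × Θ) → ℝ)
    (hmass : ∀ ω, mass ω =
      (∏ t, μ t (ω.1 t)) * (∏ t, ∏ s, μ s (ω.2.1 t s)) * ν ω.2.2)
    -- `alg` is a batched OCRS with respect to the sampling scheme `R`
    (hsub : ∀ ω t, alg ω.2.2 (R ω) t ⊆ R ω t)
    (hfeas : ∀ ω, (Finset.univ.biUnion fun t => alg ω.2.2 (R ω) t) ∈ M)
    -- `alg` is `c`-selectable
    (hsel : ∀ (t : Fin T) (S : Finset E), S ⊆ B t → ∀ e ∈ S,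
      prOf mass (fun ω => e ∈ alg ω.2.2 (R ω) t ∧ R ω t = S) ≥
        c * prOf mass (fun ω => R ω t = S)) :
    (∀ ω, (Finset.univ.biUnion fun t => alg ω.2.2 (R ω) t) ∈ M) ∧
    expOf mass
        (fun ω => ∑ e ∈ Finset.univ.biUnion (fun t => alg ω.2.2 (R ω) t), w ω.1 e)
      ≥ c * expOf mass (fun ω => ∑ e ∈ OPT (w ω.1), w ω.1 e) :=
  batched_prophet_inequality_from_batched_OCRS_general M hM B hB Ωt μ hμ0 hμ1 wt OPT hOPTmem hOPTmax
    Θ ν hν1 alg c w hw R hR mass hmass hsub hfeas hsel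
end

section
/- THEOREM (1/2-batched OCRS for matching with vertex arrival): suppose (i) for every vertex w, ∑_{z≠w} x_{wz} ≤ 1, and (ii) |R_v| ≤ 1 for every v and every realization. Consider the online algorithm that, upon arrival of vertex v with R_v = {(uv)}, matches the edge (uv) with probability α_u(v) := 1/(2 − ∑_{z<v} x_{uz}) provided u is still unmatched (where the sum is over vertices z arriving before v). Then: (a) α_u(v) ≤ 1 for all u < v, so the algorithm is well defined and always outputs a matching; (b) every edge (uv) is matched with probability exactly x_{uv}/2; and (c) P((uv) is matched | R_v = {(uv)}) = 1/2 for every u < v; in particular, the algorithm is a 1/2-selectable batched OCRS. -/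
open Finset

/-- The threshold `α_u(v) = 1 / (2 - ∑_{z < v} x_{u z})` used by the vertex-arrival
OCRS (the sum ranges over the vertices `z` arriving before `v`). -/
noncomputable def vertexAlpha {n : ℕ} (x : Fin n → Fin n → ℝ) (u v : Fin n) : ℝ :=
  1 / (2 - ∑ z ∈ Finset.univ.filter (fun z => z < v), x u z)

open Classical in
/-- The vertex-arrival OCRS process.  Vertices `0, 1, …, n-1` arrive in order; upon
arrival of vertex `v`, if the realized batch is `R_v = {(u,v)}` (encoded by
`Rv v (ω v) = {u}`) and `u` is still unmatched, the edge `(u,v)` is matched with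
probability `α_u(v)`, using the internal Bernoulli coin `θ v u`
(which is `true` with probability `α_u(v)`).  `vertexProcess Rv ω θ k` is the set of
matched edges (as ordered pairs `(u,v)` with `u < v`) after the first `k` vertices
arrived. -/
noncomputable def vertexProcess {n : ℕ} {Ω : Fin n → Type*}
    (Rv : ∀ v, Ω v → Finset (Fin n))
    (ω : ∀ v, Ω v) (θ : Fin n → Fin n → Bool) : ℕ → Finset (Fin n × Fin n)
  | 0 => ∅
  | v + 1 =>
    if h : v < n then
      vertexProcess Rv ω θ v ∪
        (Finset.univ.filter (fun u : Fin n =>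
            u < (⟨v, h⟩ : Fin n) ∧ Rv ⟨v, h⟩ (ω ⟨v, h⟩) = {u} ∧ θ ⟨v, h⟩ u = true ∧
            ∀ q ∈ vertexProcess Rv ω θ v, q.1 ≠ u ∧ q.2 ≠ u)).image
          (fun u => (u, (⟨v, h⟩ : Fin n)))
    else vertexProcess Rv ω θ v

/-- The joint mass function of the sampling scheme (independent batches `R_v`, with
`ω v` drawn according to `μ v`) together with the algorithm's internal independent
Bernoulli coins `θ v u` of bias `α_u(v)`. -/
noncomputable def vertexMass {n : ℕ} {Ω : Fin n → Type*} [∀ v, Fintype (Ω v)]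
    (μ : ∀ v, Ω v → ℝ) (x : Fin n → Fin n → ℝ)
    (q : (∀ v, Ω v) × (Fin n → Fin n → Bool)) : ℝ :=
  (∏ v, μ v (q.1 v)) *
    ∏ v, ∏ u, (if q.2 v u then vertexAlpha x u v else 1 - vertexAlpha x u v)


section Toolkit

variable {ι : Type*} [Fintype ι] {X : ι → Type*} [∀ i, Fintype (X i)]

lemma tk_sum_prod [DecidableEq ι] (m : ∀ i, X i → ℝ) :
    ∑ f : ∀ i, X i, ∏ i, m i (f i) = ∏ i, ∑ a, m i a :=
  (Fintype.prod_sum m).symm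

lemma tk_nonempty_of_sum_one {A : Type*} [Fintype A] (g : A → ℝ) (h : ∑ a, g a = 1) :
    Nonempty A := by
  by_contra hne
  rw [not_nonempty_iff] at hne
  rw [Finset.univ_eq_empty, Finset.sum_empty] at h
  norm_num at h

lemma tk_indep [DecidableEq ι] (m : ∀ i, X i → ℝ) (hm : ∀ i, ∑ a, m i a = 1)
    (p : ι → Prop) [DecidablePred p] (E F : (∀ i, X i) → ℝ)
    (hE : ∀ f g, (∀ i, p i → f i = g i) → E f = E g)
    (hF : ∀ f g, (∀ i, ¬ p i → f i = g i) → F f = F g) :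
    ∑ f, E f * F f * ∏ i, m i (f i)
      = (∑ f, E f * ∏ i, m i (f i)) * (∑ f, F f * ∏ i, m i (f i)) := by
  set e := Equiv.piEquivPiSubtypeProd p X with he
  have hsymm : ∀ (a : ∀ i : {x // p x}, X i) (b : ∀ i : {x // ¬ p x}, X i),
      (∀ i : {x // p x}, e.symm (a, b) i.1 = a i) ∧
      (∀ i : {x // ¬ p x}, e.symm (a, b) i.1 = b i) := by
    intro a b
    constructor
    · intro i
      simp [he, Equiv.piEquivPiSubtypeProd, i.2]
    · intro i
      simp [he, Equiv.piEquivPiSubtypeProd, i.2]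
  have hM : ∀ (a : ∀ i : {x // p x}, X i) (b : ∀ i : {x // ¬ p x}, X i),
      (∏ i, m i (e.symm (a, b) i))
        = (∏ i : {x // p x}, m i.1 (a i)) * (∏ i : {x // ¬ p x}, m i.1 (b i)) := by
    intro a b
    rw [← Fintype.prod_subtype_mul_prod_subtype p (fun i => m i (e.symm (a, b) i))]
    congr 1
    · exact Fintype.prod_congr _ _ fun i => by rw [(hsymm a b).1 i]
    · exact Fintype.prod_congr _ _ fun i => by rw [(hsymm a b).2 i]
  have hMA : ∑ a : ∀ i : {x // p x}, X i, ∏ i : {x // p x}, m i.1 (a i) = 1 := by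
    rw [tk_sum_prod]
    simp [hm]
  have hMB : ∑ b : ∀ i : {x // ¬ p x}, X i, ∏ i : {x // ¬ p x}, m i.1 (b i) = 1 := by
    rw [tk_sum_prod]
    simp [hm]
  have hA0 : Nonempty (∀ i : {x // p x}, X i) := tk_nonempty_of_sum_one _ hMA
  have hB0 : Nonempty (∀ i : {x // ¬ p x}, X i) := tk_nonempty_of_sum_one _ hMB
  obtain ⟨a0⟩ := hA0
  obtain ⟨b0⟩ := hB0
  -- E depends only on the `p` part:
  have hEab : ∀ a b, E (e.symm (a, b)) = E (e.symm (a, b0)) := by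
    intro a b
    apply hE
    intro i hi
    rw [(hsymm a b).1 ⟨i, hi⟩, ((hsymm a b0).1 ⟨i, hi⟩).symm]
  have hFab : ∀ a b, F (e.symm (a, b)) = F (e.symm (a0, b)) := by
    intro a b
    apply hF
    intro i hi
    rw [(hsymm a b).2 ⟨i, hi⟩, ((hsymm a0 b).2 ⟨i, hi⟩).symm]
  have key : ∀ G : (∀ i, X i) → ℝ,
      ∑ f, G f * ∏ i, m i (f i)
        = ∑ a, ∑ b, G (e.symm (a, b)) *
            ((∏ i : {x // p x}, m i.1 (a i)) * (∏ i : {x // ¬ p x}, m i.1 (b i))) := by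
    intro G
    rw [← Equiv.sum_comp e.symm (fun f => G f * ∏ i, m i (f i)), Fintype.sum_prod_type]
    exact Finset.sum_congr rfl fun a _ => Finset.sum_congr rfl fun b _ => by rw [hM]
  rw [key (fun f => E f * F f), key E, key F]
  have lhs : ∀ a b, E (e.symm (a, b)) * F (e.symm (a, b)) = E (e.symm (a, b0)) * F (e.symm (a0, b)) := by
    intro a b; rw [hEab, hFab]
  calc
    ∑ a, ∑ b, (fun f => E f * F f) (e.symm (a, b)) *
        ((∏ i : {x // p x}, m i.1 (a i)) * (∏ i : {x // ¬ p x}, m i.1 (b i)))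
      = ∑ a, ∑ b, (E (e.symm (a, b0)) * (∏ i : {x // p x}, m i.1 (a i))) *
          (F (e.symm (a0, b)) * (∏ i : {x // ¬ p x}, m i.1 (b i))) := by
        refine Finset.sum_congr rfl fun a _ => Finset.sum_congr rfl fun b _ => ?_
        simp only
        rw [lhs a b]; ring
    _ = (∑ a, E (e.symm (a, b0)) * (∏ i : {x // p x}, m i.1 (a i))) *
          (∑ b, F (e.symm (a0, b)) * (∏ i : {x // ¬ p x}, m i.1 (b i))) := by
        rw [Finset.sum_mul_sum]
    _ = (∑ a, ∑ b, E (e.symm (a, b)) *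
            ((∏ i : {x // p x}, m i.1 (a i)) * (∏ i : {x // ¬ p x}, m i.1 (b i)))) *
        (∑ a, ∑ b, F (e.symm (a, b)) *
            ((∏ i : {x // p x}, m i.1 (a i)) * (∏ i : {x // ¬ p x}, m i.1 (b i)))) := by
        congr 1
        · calc ∑ a, E (e.symm (a, b0)) * (∏ i : {x // p x}, m i.1 (a i))
              = ∑ a, (E (e.symm (a, b0)) * (∏ i : {x // p x}, m i.1 (a i))) *
                  (∑ b : ∀ i : {x // ¬ p x}, X i, ∏ i : {x // ¬ p x}, m i.1 (b i)) := by
                rw [hMB]; simp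
            _ = _ := by
                rw [Finset.sum_congr rfl fun a _ => (Finset.mul_sum _ _ _)]
                refine Finset.sum_congr rfl fun a _ => Finset.sum_congr rfl fun b _ => ?_
                rw [hEab a b]; ring
        · calc ∑ b, F (e.symm (a0, b)) * (∏ i : {x // ¬ p x}, m i.1 (b i))
              = ∑ b, (F (e.symm (a0, b)) * (∏ i : {x // ¬ p x}, m i.1 (b i))) *
                  (∑ a : ∀ i : {x // p x}, X i, ∏ i : {x // p x}, m i.1 (a i)) := by
                rw [hMA]; simp
            _ = ∑ b, ∑ a, F (e.symm (a, b)) *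
                  ((∏ i : {x // p x}, m i.1 (a i)) * (∏ i : {x // ¬ p x}, m i.1 (b i))) := by
                rw [Finset.sum_congr rfl fun b _ => (Finset.mul_sum _ _ _)]
                refine Finset.sum_congr rfl fun b _ => Finset.sum_congr rfl fun a _ => ?_
                rw [hFab a b]; ring
            _ = _ := Finset.sum_comm
  done

lemma tk_single [DecidableEq ι] (m : ∀ i, X i → ℝ) (hm : ∀ i, ∑ a, m i a = 1)
    (w : ι) (G : X w → ℝ) :
    ∑ f : ∀ i, X i, G (f w) * ∏ i, m i (f i) = ∑ a, G a * m w a := by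
  set e := Equiv.piSplitAt w X with he
  have hsymmw : ∀ (a : X w) (r : ∀ j : {j // j ≠ w}, X j), e.symm (a, r) w = a := by
    intro a r; simp [he]
  have hsymmo : ∀ (a : X w) (r : ∀ j : {j // j ≠ w}, X j) (j : {j // j ≠ w}),
      e.symm (a, r) j.1 = r j := by
    intro a r j; simp [he, j.2]
  have hM : ∀ (a : X w) (r : ∀ j : {j // j ≠ w}, X j),
      (∏ i, m i (e.symm (a, r) i)) = m w a * ∏ j : {j // j ≠ w}, m j.1 (r j) := by
    intro a r
    rw [← Finset.mul_prod_erase Finset.univ (fun i => m i (e.symm (a, r) i)) (Finset.mem_univ w),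
      hsymmw]
    congr 1
    rw [Finset.prod_subtype (Finset.univ.erase w) (p := fun j => j ≠ w)
      (by intro j; simp) (fun i => m i (e.symm (a, r) i))]
    exact Fintype.prod_congr _ _ fun j => by rw [hsymmo]
  have hMB : ∑ r : ∀ j : {j // j ≠ w}, X j, ∏ j : {j // j ≠ w}, m j.1 (r j) = 1 := by
    rw [tk_sum_prod]; simp [hm]
  rw [← Equiv.sum_comp e.symm (fun f => G (f w) * ∏ i, m i (f i)), Fintype.sum_prod_type]
  calc ∑ a, ∑ r, G (e.symm (a, r) w) * ∏ i, m i (e.symm (a, r) i)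
      = ∑ a, ∑ r : ∀ j : {j // j ≠ w}, X j,
          (G a * m w a) * ∏ j : {j // j ≠ w}, m j.1 (r j) := by
        refine Finset.sum_congr rfl fun a _ => Finset.sum_congr rfl fun r _ => ?_
        rw [hsymmw, hM]; ring
    _ = ∑ a, G a * m w a := by
        refine Finset.sum_congr rfl fun a _ => ?_
        rw [← Finset.mul_sum, hMB, mul_one]

end Toolkit

section Comb
open Classical
variable {n : ℕ} {Ω : Fin n → Type*} (Rv : ∀ v, Ω v → Finset (Fin n))
  (ω : ∀ v, Ω v) (θ : Fin n → Fin n → Bool)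

/-- `u` is unmatched in the matching `M`. -/
def unm {n : ℕ} (u : Fin n) (M : Finset (Fin n × Fin n)) : Prop :=
  ∀ q ∈ M, q.1 ≠ u ∧ q.2 ≠ u

lemma vp_mem_lt : ∀ k, ∀ e ∈ vertexProcess Rv ω θ k, e.1 < e.2 ∧ e.2.val < k := by
  intro k
  induction k with
  | zero => intro e he; simp [vertexProcess] at he
  | succ k IH =>
    intro e he
    rw [vertexProcess] at he
    by_cases h : k < n
    · rw [dif_pos h, Finset.mem_union] at he
      rcases he with he | he
      · exact ⟨(IH e he).1, Nat.lt_succ_of_lt (IH e he).2⟩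
      · rw [Finset.mem_image] at he
        obtain ⟨u, hu, rfl⟩ := he
        rw [Finset.mem_filter] at hu
        exact ⟨hu.2.1, Nat.lt_succ_self k⟩
    · rw [dif_neg h] at he
      exact ⟨(IH e he).1, Nat.lt_succ_of_lt (IH e he).2⟩

lemma vp_step (k : ℕ) (h : k < n) (e : Fin n × Fin n) :
    e ∈ vertexProcess Rv ω θ (k + 1) ↔ e ∈ vertexProcess Rv ω θ k ∨
      (e.1 < e.2 ∧ e.2 = ⟨k, h⟩ ∧ Rv ⟨k, h⟩ (ω ⟨k, h⟩) = {e.1} ∧ θ ⟨k, h⟩ e.1 = true ∧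
        unm e.1 (vertexProcess Rv ω θ k)) := by
  rw [vertexProcess, dif_pos h, Finset.mem_union, Finset.mem_image]
  constructor
  · rintro (he | ⟨u, hu, rfl⟩)
    · exact Or.inl he
    · rw [Finset.mem_filter] at hu
      exact Or.inr ⟨hu.2.1, rfl, hu.2.2.1, hu.2.2.2.1, hu.2.2.2.2⟩
  · rintro (he | ⟨h1, h2, h3, h4, h5⟩)
    · exact Or.inl he
    · refine Or.inr ⟨e.1, ?_, ?_⟩
      · rw [Finset.mem_filter]
        rw [h2] at h1
        exact ⟨Finset.mem_univ _, h1, h3, h4, h5⟩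
      · exact Prod.ext_iff.mpr ⟨rfl, h2.symm⟩

lemma vp_depends (ω' : ∀ v, Ω v) (θ' : Fin n → Fin n → Bool) (k : ℕ)
    (hω : ∀ z : Fin n, z.val < k → ω z = ω' z)
    (hθ : ∀ z : Fin n, z.val < k → θ z = θ' z) :
    vertexProcess Rv ω θ k = vertexProcess Rv ω' θ' k := by
  induction k with
  | zero => rfl
  | succ k IH =>
    have IH' := IH (fun z hz => hω z (Nat.lt_succ_of_lt hz))
      (fun z hz => hθ z (Nat.lt_succ_of_lt hz))
    rw [vertexProcess, vertexProcess]
    by_cases h : k < n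
    · rw [dif_pos h, dif_pos h, IH', hω ⟨k, h⟩ (Nat.lt_succ_self k),
        hθ ⟨k, h⟩ (Nat.lt_succ_self k)]
    · rw [dif_neg h, dif_neg h, IH']

lemma vp_mem_iff (u v : Fin n) (huv : u < v) :
    ∀ k, v.val < k →
    ((u, v) ∈ vertexProcess Rv ω θ k ↔
      Rv v (ω v) = {u} ∧ θ v u = true ∧ unm u (vertexProcess Rv ω θ v.val)) := by
  intro k
  induction k with
  | zero => omega
  | succ k IH =>
    intro hk
    by_cases h : k < n
    · rw [vp_step Rv ω θ k h]
      rcases Nat.lt_or_ge v.val k with hvk | hvk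
      · rw [IH hvk]
        have : ¬ ((u, v).2 = (⟨k, h⟩ : Fin n)) := by
          intro hh
          have hvv : v = (⟨k, h⟩ : Fin n) := hh
          rw [Fin.ext_iff] at hvv
          simp at hvv
          omega
        constructor
        · rintro (h1 | h1)
          · exact h1
          · exact absurd h1.2.1 this
        · intro h1; exact Or.inl h1
      · -- v.val = k
        have hvk' : v.val = k := by omega
        have hv : v = ⟨k, h⟩ := by rw [Fin.ext_iff]; exact hvk'
        have hnot : (u, v) ∉ vertexProcess Rv ω θ k := by
          intro hmem
          have h9 := (vp_mem_lt Rv ω θ k (u, v) hmem).2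
          have h2v : ((u, v) : Fin n × Fin n).2 = v := rfl
          rw [h2v] at h9
          omega
        constructor
        · rintro (h1 | h1)
          · exact absurd h1 hnot
          · refine ⟨by rw [hv]; exact h1.2.2.1, by rw [hv]; exact h1.2.2.2.1, ?_⟩
            have := h1.2.2.2.2
            rw [← hvk'] at this
            exact this
        · rintro ⟨h1, h2, h3⟩
          refine Or.inr ⟨huv, by rw [hv], by rw [← hv]; exact h1, by rw [← hv]; exact h2, ?_⟩
          rw [hvk'] at h3
          exact h3
    · -- k ≥ n : impossible since v.val < k+1 and v.val < n... if k ≥ n then v.val < k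
      have hvk : v.val < k := by have := v.isLt; omega
      rw [vertexProcess, dif_neg h]
      exact IH hvk

lemma unm_ge (k : ℕ) (u : Fin n) (hk : k ≤ u.val) : unm u (vertexProcess Rv ω θ k) := by
  intro q hq
  have h1 := vp_mem_lt Rv ω θ k q hq
  constructor
  · intro hh; rw [hh] at h1; have := h1.1; rw [Fin.lt_def] at this; omega
  · intro hh; rw [hh] at h1; omega

lemma unm_union (u : Fin n) (M N : Finset (Fin n × Fin n)) :
    unm u (M ∪ N) ↔ unm u M ∧ unm u N := by
  constructor
  · intro h
    exact ⟨fun q hq => h q (Finset.mem_union_left _ hq),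
      fun q hq => h q (Finset.mem_union_right _ hq)⟩
  · rintro ⟨h1, h2⟩ q hq
    rcases Finset.mem_union.1 hq with hq | hq
    · exact h1 q hq
    · exact h2 q hq

lemma unm_step_lt (k : ℕ) (h : k < n) (u : Fin n) (hu : u < (⟨k, h⟩ : Fin n)) :
    unm u (vertexProcess Rv ω θ (k + 1)) ↔
      unm u (vertexProcess Rv ω θ k) ∧
      ¬ (Rv ⟨k, h⟩ (ω ⟨k, h⟩) = {u} ∧ θ ⟨k, h⟩ u = true) := by
  rw [vertexProcess, dif_pos h, unm_union]
  constructor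
  · rintro ⟨h1, h2⟩
    refine ⟨h1, ?_⟩
    rintro ⟨hR, hθu⟩
    have hmem : (u, (⟨k, h⟩ : Fin n)) ∈ (Finset.univ.filter (fun z : Fin n =>
        z < (⟨k, h⟩ : Fin n) ∧ Rv ⟨k, h⟩ (ω ⟨k, h⟩) = {z} ∧ θ ⟨k, h⟩ z = true ∧
        ∀ q ∈ vertexProcess Rv ω θ k, q.1 ≠ z ∧ q.2 ≠ z)).image
          (fun z => (z, (⟨k, h⟩ : Fin n))) := by
      rw [Finset.mem_image]
      exact ⟨u, Finset.mem_filter.2 ⟨Finset.mem_univ _, hu, hR, hθu, h1⟩, rfl⟩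
    exact (h2 _ hmem).1 rfl
  · rintro ⟨h1, h2⟩
    refine ⟨h1, ?_⟩
    intro q hq
    rw [Finset.mem_image] at hq
    obtain ⟨z, hz, rfl⟩ := hq
    rw [Finset.mem_filter] at hz
    constructor
    · intro hh
      simp only at hh
      rw [hh] at hz
      exact h2 ⟨hz.2.2.1, hz.2.2.2.1⟩
    · intro hh
      simp only at hh
      rw [← hh] at hu
      exact lt_irrefl _ hu
  done

lemma unm_step_eq (k : ℕ) (h : k < n) :
    unm (⟨k, h⟩ : Fin n) (vertexProcess Rv ω θ (k + 1)) ↔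
      ¬ ∃ z : Fin n, z < (⟨k, h⟩ : Fin n) ∧ Rv ⟨k, h⟩ (ω ⟨k, h⟩) = {z} ∧
          θ ⟨k, h⟩ z = true ∧ unm z (vertexProcess Rv ω θ k) := by
  rw [vertexProcess, dif_pos h, unm_union]
  constructor
  · rintro ⟨h1, h2⟩
    rintro ⟨z, hz1, hz2, hz3, hz4⟩
    have hmem : (z, (⟨k, h⟩ : Fin n)) ∈ (Finset.univ.filter (fun z : Fin n =>
        z < (⟨k, h⟩ : Fin n) ∧ Rv ⟨k, h⟩ (ω ⟨k, h⟩) = {z} ∧ θ ⟨k, h⟩ z = true ∧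
        ∀ q ∈ vertexProcess Rv ω θ k, q.1 ≠ z ∧ q.2 ≠ z)).image
          (fun z => (z, (⟨k, h⟩ : Fin n))) := by
      rw [Finset.mem_image]
      exact ⟨z, Finset.mem_filter.2 ⟨Finset.mem_univ _, hz1, hz2, hz3, hz4⟩, rfl⟩
    exact (h2 _ hmem).2 rfl
  · intro h2
    refine ⟨unm_ge Rv ω θ k _ (le_refl _), ?_⟩
    intro q hq
    rw [Finset.mem_image] at hq
    obtain ⟨z, hz, rfl⟩ := hq
    rw [Finset.mem_filter] at hz
    constructor
    · intro hh
      simp only at hh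
      rw [hh] at hz
      have := hz.2.1
      exact lt_irrefl _ this
    · intro _
      exact h2 ⟨z, hz.2.1, hz.2.2.1, hz.2.2.2.1, hz.2.2.2.2⟩

lemma vp_matching (k : ℕ) :
    ∀ e ∈ vertexProcess Rv ω θ k, ∀ e' ∈ vertexProcess Rv ω θ k, e ≠ e' →
      e.1 ≠ e'.1 ∧ e.1 ≠ e'.2 ∧ e.2 ≠ e'.1 ∧ e.2 ≠ e'.2 := by
  induction k with
  | zero => intro e he; simp [vertexProcess] at he
  | succ k IH =>
    by_cases h : k < n
    · intro e he e' he' hne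
      rw [vp_step Rv ω θ k h] at he he'
      have hlt := fun (e : Fin n × Fin n) (he : e ∈ vertexProcess Rv ω θ k) =>
        vp_mem_lt Rv ω θ k e he
      rcases he with he | he <;> rcases he' with he' | he'
      · exact IH e he e' he' hne
      · -- e old, e' new
        obtain ⟨h1', h2', h3', h4', h5'⟩ := he'
        have hu := h5' e he
        have hlt' := vp_mem_lt Rv ω θ k e he
        have hv1 : e.1.val < k := lt_trans (Fin.lt_def.mp hlt'.1) hlt'.2
        refine ⟨hu.1, ?_, hu.2, ?_⟩
        · intro hh
          rw [hh, h2'] at hv1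
          simp at hv1
        · intro hh
          have := hlt'.2
          rw [hh, h2'] at this
          simp at this
      · -- e new, e' old
        obtain ⟨h1, h2, h3, h4, h5⟩ := he
        have hu := h5 e' he'
        have hlt' := vp_mem_lt Rv ω θ k e' he'
        have hv1 : e'.1.val < k := lt_trans (Fin.lt_def.mp hlt'.1) hlt'.2
        refine ⟨Ne.symm hu.1, Ne.symm hu.2, ?_, ?_⟩
        · intro hh
          rw [← hh, h2] at hv1
          simp at hv1
        · intro hh
          have := hlt'.2
          rw [← hh, h2] at this
          simp at this
      · -- both new
        exfalso
        obtain ⟨h1, h2, h3, h4, h5⟩ := he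
        obtain ⟨h1', h2', h3', h4', h5'⟩ := he'
        have hfst : e.1 = e'.1 :=
          Finset.singleton_injective (h3.symm.trans h3')
        exact hne (Prod.ext_iff.mpr ⟨hfst, h2.trans h2'.symm⟩)
    · intro e he e' he' hne
      rw [vertexProcess, dif_neg h] at he he'
      exact IH e he e' he' hne

end Comb

section ProbGeneric

lemma prOf_congr {Q : Type*} [Fintype Q] (m : Q → ℝ) {P P' : Q → Prop}
    (h : ∀ q, P q ↔ P' q) : prOf m P = prOf m P' := by
  simp only [prOf]
  refine Finset.sum_congr rfl fun q _ => ?_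
  by_cases hq : P q
  · rw [if_pos hq, if_pos ((h q).1 hq)]
  · rw [if_neg hq, if_neg (fun hh => hq ((h q).2 hh))]

lemma prOf_sub {Q : Type*} [Fintype Q] (m : Q → ℝ) (A B : Q → Prop) :
    prOf m (fun q => A q ∧ ¬ B q) = prOf m A - prOf m (fun q => A q ∧ B q) := by
  simp only [prOf, ← Finset.sum_sub_distrib]
  refine Finset.sum_congr rfl fun q _ => ?_
  by_cases hA : A q <;> by_cases hB : B q <;> simp [hA, hB]

lemma prOf_not {Q : Type*} [Fintype Q] (m : Q → ℝ) (B : Q → Prop) :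
    prOf m (fun q => ¬ B q) = prOf m (fun _ => True) - prOf m B := by
  simp only [prOf, ← Finset.sum_sub_distrib]
  refine Finset.sum_congr rfl fun q _ => ?_
  by_cases hB : B q <;> simp [hB]

lemma prOf_exists {Q : Type*} [Fintype Q] (m : Q → ℝ) {β : Type*} (s : Finset β)
    (C : β → Q → Prop)
    (hdisj : ∀ q z z', z ∈ s → z' ∈ s → C z q → C z' q → z = z') :
    prOf m (fun q => ∃ z ∈ s, C z q) = ∑ z ∈ s, prOf m (C z) := by
  simp only [prOf]
  rw [Finset.sum_comm]
  refine Finset.sum_congr rfl fun q _ => ?_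
  by_cases hex : ∃ z ∈ s, C z q
  · obtain ⟨z₀, hz₀, hC⟩ := hex
    rw [if_pos ⟨z₀, hz₀, hC⟩, Finset.sum_eq_single_of_mem z₀ hz₀]
    · rw [if_pos hC]
    · intro z hz hne
      rw [if_neg]
      intro hCz
      exact hne (hdisj q z z₀ hz hz₀ hCz hC)
  · rw [if_neg hex]
    refine (Finset.sum_eq_zero fun z hz => ?_).symm
    rw [if_neg]
    intro hC
    exact hex ⟨z, hz, hC⟩

end ProbGeneric

section ProbVertex
open Classical
variable {n : ℕ} {Ω : Fin n → Type} [∀ v, Fintype (Ω v)]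

/-- Repackaging of the sample space as a product indexed by vertices. -/
def pairPi {n : ℕ} {Ω : Fin n → Type} :
    ((∀ v, Ω v) × (Fin n → Fin n → Bool)) ≃ (∀ v : Fin n, Ω v × (Fin n → Bool)) where
  toFun q v := (q.1 v, q.2 v)
  invFun f := (fun v => (f v).1, fun v u => (f v).2 u)
  left_inv q := rfl
  right_inv f := rfl

noncomputable def coinM {n : ℕ} (x : Fin n → Fin n → ℝ) (v u : Fin n) (b : Bool) : ℝ :=
  if b then vertexAlpha x u v else 1 - vertexAlpha x u v

noncomputable def mAll {n : ℕ} {Ω : Fin n → Type} (μ : ∀ v, Ω v → ℝ)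
    (x : Fin n → Fin n → ℝ) (v : Fin n) (a : Ω v × (Fin n → Bool)) : ℝ :=
  μ v a.1 * ∏ u, coinM x v u (a.2 u)

@[simp] lemma pairPi_symm_fst (f : ∀ v : Fin n, Ω v × (Fin n → Bool)) (v : Fin n) :
    (pairPi.symm f).1 v = (f v).1 := rfl

@[simp] lemma pairPi_symm_snd (f : ∀ v : Fin n, Ω v × (Fin n → Bool)) (v u : Fin n) :
    (pairPi.symm f).2 v u = (f v).2 u := rfl

variable (μ : ∀ v, Ω v → ℝ) (x : Fin n → Fin n → ℝ)

lemma vertexMass_eq (q : (∀ v, Ω v) × (Fin n → Fin n → Bool)) :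
    vertexMass μ x q = ∏ v, mAll μ x v (pairPi q v) := by
  unfold vertexMass
  rw [← Finset.prod_mul_distrib]
  rfl

lemma hcoin_sum (w : Fin n) : ∑ t : Fin n → Bool, ∏ u, coinM x w u (t u) = 1 := by
  rw [tk_sum_prod (X := fun _ : Fin n => Bool) (fun u b => coinM x w u b)]
  refine Finset.prod_eq_one fun u _ => ?_
  rw [Fintype.sum_bool]
  simp [coinM]

lemma hmAll_sum (hμ1 : ∀ v, ∑ o, μ v o = 1) (v : Fin n) :
    ∑ a : Ω v × (Fin n → Bool), mAll μ x v a = 1 := by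
  rw [Fintype.sum_prod_type]
  calc ∑ o : Ω v, ∑ t : Fin n → Bool, mAll μ x v (o, t)
      = ∑ o : Ω v, μ v o * ∑ t : Fin n → Bool, ∏ u, coinM x v u (t u) := by
        refine Finset.sum_congr rfl fun o _ => ?_
        rw [Finset.mul_sum]
        rfl
    _ = 1 := by
        rw [hcoin_sum]
        simp [hμ1 v]

lemma prOf_eq (P : ((∀ v, Ω v) × (Fin n → Fin n → Bool)) → Prop) :
    prOf (vertexMass μ x) P
      = ∑ f : ∀ v : Fin n, Ω v × (Fin n → Bool),
          (if P (pairPi.symm f) then (1 : ℝ) else 0) * ∏ v, mAll μ x v (f v) := by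
  rw [prOf, ← Equiv.sum_comp (pairPi (Ω := Ω)).symm
    (fun q => if P q then vertexMass μ x q else 0)]
  refine Finset.sum_congr rfl fun f _ => ?_
  rw [vertexMass_eq, Equiv.apply_symm_apply]
  by_cases hP : P (pairPi.symm f) <;> simp [hP]

lemma prOf_true (hμ1 : ∀ v, ∑ o, μ v o = 1) :
    prOf (vertexMass μ x) (fun _ => True) = 1 := by
  rw [prOf_eq]
  trans (∑ f : ∀ v : Fin n, Ω v × (Fin n → Bool), ∏ v, mAll μ x v (f v))
  · exact Finset.sum_congr rfl fun f _ => by simp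
  rw [tk_sum_prod (mAll μ x), Finset.prod_congr rfl fun v _ => hmAll_sum μ x hμ1 v]
  simp

variable (Rv : ∀ v, Ω v → Finset (Fin n))

lemma prOf_R (hμ1 : ∀ v, ∑ o, μ v o = 1) (w u : Fin n) :
    prOf (vertexMass μ x) (fun q => Rv w (q.1 w) = {u})
      = ∑ o : Ω w, if Rv w o = {u} then μ w o else 0 := by
  rw [prOf_eq]
  trans (∑ f : ∀ v : Fin n, Ω v × (Fin n → Bool),
    (fun a : Ω w × (Fin n → Bool) => if Rv w a.1 = {u} then (1 : ℝ) else 0) (f w)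
      * ∏ v, mAll μ x v (f v))
  · refine Finset.sum_congr rfl fun f _ => ?_
    by_cases hR : Rv w ((f w).1) = {u} <;> simp [hR]
  trans (∑ a : Ω w × (Fin n → Bool),
    (if Rv w a.1 = {u} then (1 : ℝ) else 0) * mAll μ x w a)
  · exact tk_single (mAll μ x) (hmAll_sum μ x hμ1) w
      (fun a : Ω w × (Fin n → Bool) => if Rv w a.1 = {u} then (1 : ℝ) else 0)
  rw [Fintype.sum_prod_type]
  calc ∑ o : Ω w, ∑ t : Fin n → Bool,
        (if Rv w o = {u} then (1 : ℝ) else 0) * mAll μ x w (o, t)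
      = ∑ o : Ω w, (if Rv w o = {u} then μ w o else 0) *
          ∑ t : Fin n → Bool, ∏ u', coinM x w u' (t u') := by
        refine Finset.sum_congr rfl fun o _ => ?_
        rw [Finset.mul_sum]
        refine Finset.sum_congr rfl fun t _ => ?_
        show (if Rv w o = {u} then (1 : ℝ) else 0) * (μ w o * ∏ u', coinM x w u' (t u'))
          = (if Rv w o = {u} then μ w o else 0) * ∏ u', coinM x w u' (t u')
        by_cases hR : Rv w o = {u} <;> simp [hR]
    _ = ∑ o : Ω w, if Rv w o = {u} then μ w o else 0 := by
        refine Finset.sum_congr rfl fun o _ => ?_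
        rw [hcoin_sum, mul_one]

lemma prOf_factor (hμ1 : ∀ v, ∑ o, μ v o = 1) (w u : Fin n)
    (A : ((∀ v, Ω v) × (Fin n → Fin n → Bool)) → Prop)
    (hA : ∀ q q' : (∀ v, Ω v) × (Fin n → Fin n → Bool),
      (∀ z : Fin n, z < w → q.1 z = q'.1 z ∧ q.2 z = q'.2 z) → (A q ↔ A q')) :
    prOf (vertexMass μ x) (fun q => A q ∧ Rv w (q.1 w) = {u} ∧ q.2 w u = true)
      = prOf (vertexMass μ x) A *
        ((∑ o : Ω w, if Rv w o = {u} then μ w o else 0) * vertexAlpha x u w) := by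
  have hB : prOf (vertexMass μ x) (fun q => Rv w (q.1 w) = {u} ∧ q.2 w u = true)
      = (∑ o : Ω w, if Rv w o = {u} then μ w o else 0) * vertexAlpha x u w := by
    rw [prOf_eq]
    trans (∑ f : ∀ v : Fin n, Ω v × (Fin n → Bool),
      (fun a : Ω w × (Fin n → Bool) => if Rv w a.1 = {u} ∧ a.2 u = true then (1 : ℝ) else 0)
        (f w) * ∏ v, mAll μ x v (f v))
    · refine Finset.sum_congr rfl fun f _ => ?_
      by_cases h1 : Rv w ((f w).1) = {u} <;> by_cases h2 : (f w).2 u = true <;>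
        simp [h1, h2]
    trans (∑ a : Ω w × (Fin n → Bool),
      (if Rv w a.1 = {u} ∧ a.2 u = true then (1 : ℝ) else 0) * mAll μ x w a)
    · exact tk_single (mAll μ x) (hmAll_sum μ x hμ1) w
        (fun a : Ω w × (Fin n → Bool) => if Rv w a.1 = {u} ∧ a.2 u = true then (1 : ℝ) else 0)
    rw [Fintype.sum_prod_type]
    have hθ : ∑ t : Fin n → Bool, (if t u = true then (1 : ℝ) else 0) *
        ∏ u', coinM x w u' (t u') = vertexAlpha x u w := by
      rw [tk_single (X := fun _ : Fin n => Bool) (fun u' b => coinM x w u' b)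
        (fun u' => by rw [Fintype.sum_bool]; simp [coinM]) u
        (fun b => if b = true then (1 : ℝ) else 0)]
      rw [Fintype.sum_bool]
      simp [coinM]
    calc ∑ o : Ω w, ∑ t : Fin n → Bool,
          (if Rv w o = {u} ∧ t u = true then (1 : ℝ) else 0) * mAll μ x w (o, t)
        = ∑ o : Ω w, (if Rv w o = {u} then μ w o else 0) *
            ∑ t : Fin n → Bool, (if t u = true then (1 : ℝ) else 0) *
              ∏ u', coinM x w u' (t u') := by
          refine Finset.sum_congr rfl fun o _ => ?_
          rw [Finset.mul_sum]
          refine Finset.sum_congr rfl fun t _ => ?_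
          show (if Rv w o = {u} ∧ t u = true then (1 : ℝ) else 0)
              * (μ w o * ∏ u', coinM x w u' (t u'))
            = (if Rv w o = {u} then μ w o else 0) *
              ((if t u = true then (1 : ℝ) else 0) * ∏ u', coinM x w u' (t u'))
          by_cases hR : Rv w o = {u} <;> by_cases ht : t u = true <;>
            simp [hR, ht] <;> ring
      _ = (∑ o : Ω w, if Rv w o = {u} then μ w o else 0) * vertexAlpha x u w := by
          rw [Finset.sum_congr rfl fun o _ => by rw [hθ], ← Finset.sum_mul]
  rw [← hB, prOf_eq, prOf_eq, prOf_eq]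
  trans (∑ f : ∀ v : Fin n, Ω v × (Fin n → Bool),
    ((fun f : ∀ v : Fin n, Ω v × (Fin n → Bool) =>
        if A (pairPi.symm f) then (1 : ℝ) else 0) f *
      (fun f : ∀ v : Fin n, Ω v × (Fin n → Bool) =>
        if Rv w ((f w).1) = {u} ∧ (f w).2 u = true then (1 : ℝ) else 0) f)
      * ∏ v, mAll μ x v (f v))
  · refine Finset.sum_congr rfl fun f _ => ?_
    by_cases h1 : A (pairPi.symm f) <;>
      by_cases h2 : Rv w ((f w).1) = {u} <;> by_cases h3 : (f w).2 u = true <;>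
      simp [h1, h2, h3]
  refine Eq.trans (tk_indep (mAll μ x) (hmAll_sum μ x hμ1) (fun z => z < w)
    (fun f => if A (pairPi.symm f) then (1 : ℝ) else 0)
    (fun f => if Rv w ((f w).1) = {u} ∧ (f w).2 u = true then (1 : ℝ) else 0) ?_ ?_) ?_
  · intro f g hfg
    show (if A (pairPi.symm f) then (1 : ℝ) else 0) = (if A (pairPi.symm g) then (1 : ℝ) else 0)
    have hAiff : A (pairPi.symm f) ↔ A (pairPi.symm g) := by
      apply hA
      intro z hz
      constructor
      · show (f z).1 = (g z).1
        rw [hfg z hz]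
      · show (fun u' => (f z).2 u') = (fun u' => (g z).2 u')
        rw [hfg z hz]
    by_cases h1 : A (pairPi.symm f)
    · rw [if_pos h1, if_pos (hAiff.1 h1)]
    · rw [if_neg h1, if_neg (fun hh => h1 (hAiff.2 hh))]
  · intro f g hfg
    show (if Rv w ((f w).1) = {u} ∧ (f w).2 u = true then (1 : ℝ) else 0)
      = (if Rv w ((g w).1) = {u} ∧ (g w).2 u = true then (1 : ℝ) else 0)
    have hw : f w = g w := hfg w (lt_irrefl w)
    rw [hw]
  · congr 1
    refine Finset.sum_congr rfl fun f _ => ?_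
    by_cases h2 : Rv w ((f w).1) = {u} <;> by_cases h3 : (f w).2 u = true <;>
      simp [h2, h3]

end ProbVertex


section Main
open Classical
variable {n : ℕ} {Ω : Fin n → Type} [∀ v, Fintype (Ω v)]
variable (μ : ∀ v, Ω v → ℝ) (x : Fin n → Fin n → ℝ) (Rv : ∀ v, Ω v → Finset (Fin n))

lemma hx_nonneg (hμ0 : ∀ v o, 0 ≤ μ v o)
    (hxdef : ∀ u v : Fin n, u < v → x u v = ∑ o : Ω v, if u ∈ Rv v o then μ v o else 0)
    (hxsym : ∀ u v, x u v = x v u) (hxdiag : ∀ u, x u u = 0) :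
    ∀ u v, 0 ≤ x u v := by
  have key : ∀ u v : Fin n, u < v → 0 ≤ x u v := by
    intro u v huv
    rw [hxdef u v huv]
    refine Finset.sum_nonneg fun o _ => ?_
    by_cases h : u ∈ Rv v o <;> simp [h, hμ0 v o]
  intro u v
  rcases lt_trichotomy u v with h | h | h
  · exact key u v h
  · rw [h, hxdiag]
  · rw [hxsym]; exact key v u h

lemma hx_sum_le (hxdiag : ∀ u, x u u = 0)
    (hxsum : ∀ w : Fin n, ∑ z ∈ Finset.univ.erase w, x w z ≤ 1)
    (hx0 : ∀ u v, 0 ≤ x u v) :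
    ∀ (u : Fin n) (s : Finset (Fin n)), ∑ z ∈ s, x u z ≤ 1 := by
  intro u s
  rw [← Finset.sum_erase s (hxdiag u)]
  exact le_trans (Finset.sum_le_sum_of_subset_of_nonneg
    (Finset.erase_subset_erase u (Finset.subset_univ s)) fun z _ _ => hx0 u z) (hxsum u)

lemma halpha_gen (u v : Fin n) (k : ℕ) (hk : ∀ z : Fin n, z < v ↔ z.val < k) :
    vertexAlpha x u v
      = 1 / (2 - ∑ z ∈ Finset.univ.filter (fun z : Fin n => z.val < k), x u z) := by
  unfold vertexAlpha
  have hf : Finset.univ.filter (fun z : Fin n => z < v)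
      = Finset.univ.filter (fun z : Fin n => z.val < k) := by
    ext z
    simp [Finset.mem_filter, hk z]
  rw [hf]

lemma hxR (hRcard : ∀ v o, (Rv v o).card ≤ 1)
    (hxdef : ∀ u v : Fin n, u < v → x u v = ∑ o : Ω v, if u ∈ Rv v o then μ v o else 0) :
    ∀ u v : Fin n, u < v →
      (∑ o : Ω v, if Rv v o = {u} then μ v o else 0) = x u v := by
  intro u v huv
  rw [hxdef u v huv]
  refine Finset.sum_congr rfl fun o _ => ?_
  have hiff : Rv v o = {u} ↔ u ∈ Rv v o := by
    constructor
    · intro h; rw [h]; exact Finset.mem_singleton_self u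
    · intro h
      exact Finset.eq_singleton_iff_unique_mem.mpr
        ⟨h, fun y hy => Finset.card_le_one.mp (hRcard v o) y hy u h⟩
  by_cases h : u ∈ Rv v o
  · rw [if_pos (hiff.2 h), if_pos h]
  · rw [if_neg (fun hh => h (hiff.1 hh)), if_neg h]

lemma unm_prob (hμ0 : ∀ v o, 0 ≤ μ v o) (hμ1 : ∀ v, ∑ o, μ v o = 1)
    (hRcard : ∀ v o, (Rv v o).card ≤ 1)
    (hxdef : ∀ u v : Fin n, u < v → x u v = ∑ o : Ω v, if u ∈ Rv v o then μ v o else 0)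
    (hxsym : ∀ u v, x u v = x v u) (hxdiag : ∀ u, x u u = 0)
    (hxsum : ∀ w : Fin n, ∑ z ∈ Finset.univ.erase w, x w z ≤ 1) :
    ∀ k, k ≤ n → ∀ u : Fin n, u.val < k →
      prOf (vertexMass μ x) (fun q => unm u (vertexProcess Rv q.1 q.2 k))
        = 1 - (1/2) * ∑ z ∈ Finset.univ.filter (fun z : Fin n => z.val < k), x u z := by
  have hx0 := hx_nonneg μ x Rv hμ0 hxdef hxsym hxdiag
  have hsle := hx_sum_le x hxdiag hxsum hx0
  intro k
  induction k with
  | zero => intro _ u hu; omega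
  | succ k IH =>
    intro hk1 u hu
    have h : k < n := lt_of_lt_of_le (Nat.lt_succ_self k) hk1
    have hkn : k ≤ n := le_of_lt h
    have hfilter : Finset.univ.filter (fun z : Fin n => z.val < k + 1)
        = insert (⟨k, h⟩ : Fin n) (Finset.univ.filter (fun z : Fin n => z.val < k)) := by
      ext z
      simp only [Finset.mem_filter, Finset.mem_insert, Finset.mem_univ, true_and, Fin.ext_iff]
      omega
    have hnotmem : (⟨k, h⟩ : Fin n) ∉ Finset.univ.filter (fun z : Fin n => z.val < k) := by
      simp
    have hSnn : ∀ u' : Fin n,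
        0 ≤ ∑ z ∈ Finset.univ.filter (fun z : Fin n => z.val < k), x u' z :=
      fun u' => Finset.sum_nonneg fun z _ => hx0 u' z
    have hS1 : ∀ u' : Fin n,
        ∑ z ∈ Finset.univ.filter (fun z : Fin n => z.val < k), x u' z ≤ 1 :=
      fun u' => hsle u' _
    have h2S : ∀ u' : Fin n,
        (2 : ℝ) - ∑ z ∈ Finset.univ.filter (fun z : Fin n => z.val < k), x u' z ≠ 0 := by
      intro u'
      have := hS1 u'
      have := hSnn u'
      intro hh
      linarith
    have hdep : ∀ u' : Fin n, ∀ q q' : (∀ v, Ω v) × (Fin n → Fin n → Bool),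
        (∀ z : Fin n, z < (⟨k, h⟩ : Fin n) → q.1 z = q'.1 z ∧ q.2 z = q'.2 z) →
        (unm u' (vertexProcess Rv q.1 q.2 k) ↔ unm u' (vertexProcess Rv q'.1 q'.2 k)) := by
      intro u' q q' hagree
      rw [vp_depends Rv q.1 q.2 q'.1 q'.2 k
        (fun z hz => (hagree z hz).1) (fun z hz => (hagree z hz).2)]
    rcases Nat.lt_or_ge u.val k with hu2 | hu2
    · -- u arrived strictly before vertex k
      have huw : u < (⟨k, h⟩ : Fin n) := hu2
      have e1 : prOf (vertexMass μ x) (fun q => unm u (vertexProcess Rv q.1 q.2 (k + 1)))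
          = prOf (vertexMass μ x) (fun q => unm u (vertexProcess Rv q.1 q.2 k)) -
            prOf (vertexMass μ x) (fun q => unm u (vertexProcess Rv q.1 q.2 k) ∧
              (Rv ⟨k, h⟩ (q.1 ⟨k, h⟩) = {u} ∧ q.2 ⟨k, h⟩ u = true)) :=
        (prOf_congr (vertexMass μ x)
            (P' := fun q => unm u (vertexProcess Rv q.1 q.2 k) ∧
              ¬ (Rv ⟨k, h⟩ (q.1 ⟨k, h⟩) = {u} ∧ q.2 ⟨k, h⟩ u = true))
            (fun q => unm_step_lt Rv q.1 q.2 k h u huw)).trans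
          (prOf_sub (vertexMass μ x)
            (fun q => unm u (vertexProcess Rv q.1 q.2 k))
            (fun q => Rv ⟨k, h⟩ (q.1 ⟨k, h⟩) = {u} ∧ q.2 ⟨k, h⟩ u = true))
      have e2 : prOf (vertexMass μ x) (fun q => unm u (vertexProcess Rv q.1 q.2 k) ∧
            (Rv ⟨k, h⟩ (q.1 ⟨k, h⟩) = {u} ∧ q.2 ⟨k, h⟩ u = true))
          = prOf (vertexMass μ x) (fun q => unm u (vertexProcess Rv q.1 q.2 k)) *
              (x u ⟨k, h⟩ * vertexAlpha x u ⟨k, h⟩) := by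
        rw [prOf_factor μ x Rv hμ1 ⟨k, h⟩ u _ (hdep u),
          hxR μ x Rv hRcard hxdef u ⟨k, h⟩ huw]
      have e3 := IH hkn u hu2
      have e4 : vertexAlpha x u ⟨k, h⟩
          = 1 / (2 - ∑ z ∈ Finset.univ.filter (fun z : Fin n => z.val < k), x u z) :=
        halpha_gen x u ⟨k, h⟩ k (fun z => Fin.lt_def)
      rw [e1, e2, e3, e4, hfilter, Finset.sum_insert hnotmem]
      have hne := h2S u
      field_simp
      ring
    · -- u = vertex k
      have huw : u = (⟨k, h⟩ : Fin n) := Fin.ext (show u.val = k by omega)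
      subst huw
      have e1 : prOf (vertexMass μ x)
            (fun q => unm (⟨k, h⟩ : Fin n) (vertexProcess Rv q.1 q.2 (k + 1)))
          = prOf (vertexMass μ x) (fun _ => True) -
            prOf (vertexMass μ x) (fun q => ∃ z : Fin n, z < (⟨k, h⟩ : Fin n) ∧
              Rv ⟨k, h⟩ (q.1 ⟨k, h⟩) = {z} ∧ q.2 ⟨k, h⟩ z = true ∧
                unm z (vertexProcess Rv q.1 q.2 k)) :=
        (prOf_congr (vertexMass μ x)
            (P' := fun q => ¬ ∃ z : Fin n, z < (⟨k, h⟩ : Fin n) ∧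
              Rv ⟨k, h⟩ (q.1 ⟨k, h⟩) = {z} ∧ q.2 ⟨k, h⟩ z = true ∧
                unm z (vertexProcess Rv q.1 q.2 k))
            (fun q => unm_step_eq Rv q.1 q.2 k h)).trans
          (prOf_not (vertexMass μ x)
            (fun q => ∃ z : Fin n, z < (⟨k, h⟩ : Fin n) ∧
              Rv ⟨k, h⟩ (q.1 ⟨k, h⟩) = {z} ∧ q.2 ⟨k, h⟩ z = true ∧
                unm z (vertexProcess Rv q.1 q.2 k)))
      have e2 : prOf (vertexMass μ x) (fun q => ∃ z : Fin n, z < (⟨k, h⟩ : Fin n) ∧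
            Rv ⟨k, h⟩ (q.1 ⟨k, h⟩) = {z} ∧ q.2 ⟨k, h⟩ z = true ∧
              unm z (vertexProcess Rv q.1 q.2 k))
          = prOf (vertexMass μ x)
              (fun q => ∃ z ∈ Finset.univ.filter (fun z : Fin n => z.val < k),
                (Rv ⟨k, h⟩ (q.1 ⟨k, h⟩) = {z} ∧ q.2 ⟨k, h⟩ z = true ∧
                  unm z (vertexProcess Rv q.1 q.2 k))) := by
        refine prOf_congr (vertexMass μ x)
          (P' := fun q => ∃ z ∈ Finset.univ.filter (fun z : Fin n => z.val < k),
            (Rv ⟨k, h⟩ (q.1 ⟨k, h⟩) = {z} ∧ q.2 ⟨k, h⟩ z = true ∧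
              unm z (vertexProcess Rv q.1 q.2 k))) fun q => ?_
        constructor
        · rintro ⟨z, hz1, hz2, hz3, hz4⟩
          exact ⟨z, Finset.mem_filter.2 ⟨Finset.mem_univ _, hz1⟩, hz2, hz3, hz4⟩
        · rintro ⟨z, hz1, hz2, hz3, hz4⟩
          exact ⟨z, (Finset.mem_filter.1 hz1).2, hz2, hz3, hz4⟩
      have e3 : prOf (vertexMass μ x)
            (fun q => ∃ z ∈ Finset.univ.filter (fun z : Fin n => z.val < k),
              (Rv ⟨k, h⟩ (q.1 ⟨k, h⟩) = {z} ∧ q.2 ⟨k, h⟩ z = true ∧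
                unm z (vertexProcess Rv q.1 q.2 k)))
          = ∑ z ∈ Finset.univ.filter (fun z : Fin n => z.val < k),
              prOf (vertexMass μ x) (fun q => Rv ⟨k, h⟩ (q.1 ⟨k, h⟩) = {z} ∧
                q.2 ⟨k, h⟩ z = true ∧ unm z (vertexProcess Rv q.1 q.2 k)) := by
        refine prOf_exists (vertexMass μ x)
          (Finset.univ.filter (fun z : Fin n => z.val < k))
          (fun z q => Rv ⟨k, h⟩ (q.1 ⟨k, h⟩) = {z} ∧ q.2 ⟨k, h⟩ z = true ∧
            unm z (vertexProcess Rv q.1 q.2 k)) fun q z z' _ _ hC hC' => ?_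
        exact Finset.singleton_injective (hC.1.symm.trans hC'.1)
      have e4 : ∀ z ∈ Finset.univ.filter (fun z : Fin n => z.val < k),
          prOf (vertexMass μ x) (fun q => Rv ⟨k, h⟩ (q.1 ⟨k, h⟩) = {z} ∧
            q.2 ⟨k, h⟩ z = true ∧ unm z (vertexProcess Rv q.1 q.2 k))
          = x z ⟨k, h⟩ / 2 := by
        intro z hz
        have hzk : z.val < k := (Finset.mem_filter.1 hz).2
        have hzw : z < (⟨k, h⟩ : Fin n) := hzk
        have f1 : prOf (vertexMass μ x) (fun q => Rv ⟨k, h⟩ (q.1 ⟨k, h⟩) = {z} ∧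
              q.2 ⟨k, h⟩ z = true ∧ unm z (vertexProcess Rv q.1 q.2 k))
            = prOf (vertexMass μ x) (fun q => unm z (vertexProcess Rv q.1 q.2 k) ∧
                Rv ⟨k, h⟩ (q.1 ⟨k, h⟩) = {z} ∧ q.2 ⟨k, h⟩ z = true) :=
          prOf_congr (vertexMass μ x)
            (P' := fun q => unm z (vertexProcess Rv q.1 q.2 k) ∧
              Rv ⟨k, h⟩ (q.1 ⟨k, h⟩) = {z} ∧ q.2 ⟨k, h⟩ z = true) fun q => by tauto
        have f2 : prOf (vertexMass μ x) (fun q => unm z (vertexProcess Rv q.1 q.2 k) ∧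
              Rv ⟨k, h⟩ (q.1 ⟨k, h⟩) = {z} ∧ q.2 ⟨k, h⟩ z = true)
            = prOf (vertexMass μ x) (fun q => unm z (vertexProcess Rv q.1 q.2 k)) *
                (x z ⟨k, h⟩ * vertexAlpha x z ⟨k, h⟩) := by
          rw [prOf_factor μ x Rv hμ1 ⟨k, h⟩ z _ (hdep z),
            hxR μ x Rv hRcard hxdef z ⟨k, h⟩ hzw]
        have f3 := IH hkn z hzk
        have f4 : vertexAlpha x z ⟨k, h⟩
            = 1 / (2 - ∑ y ∈ Finset.univ.filter (fun y : Fin n => y.val < k), x z y) :=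
          halpha_gen x z ⟨k, h⟩ k (fun y => Fin.lt_def)
        rw [f1, f2, f3, f4]
        have hne := h2S z
        field_simp
      rw [e1, e2, e3, Finset.sum_congr rfl e4, prOf_true μ x hμ1, hfilter,
        Finset.sum_insert hnotmem, hxdiag]
      rw [Finset.sum_congr rfl (fun z _ => hxsym (⟨k, h⟩ : Fin n) z),
        ← Finset.sum_div]
      ring
end Main


open Classical in
/-- `1/2`-batched OCRS for matching with vertex arrival (Theorem 4.1 in the paper).
Vertices `0, …, n-1` arrive in order; `R_v ⊆ {(u,v) : u < v}` is the realized batch of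
vertex `v` (encoded by the set `Rv v o` of earlier endpoints `u`), the batches being
mutually independent, with marginals `x u v = P((u,v) ∈ R_v)`.  Assume
(i) `∑_{z ≠ w} x_{w z} ≤ 1` for every vertex `w`, and (ii) `|R_v| ≤ 1` always.
Then, for the algorithm that upon arrival of `v` with `R_v = {(u,v)}` matches `(u,v)`
with probability `α_u(v) = 1/(2 - ∑_{z<v} x_{u z})` provided `u` is unmatched:
(a) `α_u(v) ≤ 1` for all `u < v`, and the algorithm always outputs a matching;
(b) every edge `(u,v)` is matched with probability exactly `x u v / 2`;
(c) `P((u,v) matched ∧ R_v = {(u,v)}) = (1/2) * P(R_v = {(u,v)})`, i.e. conditioned on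
its realization every edge is selected with probability exactly `1/2`; in particular the
algorithm is a `1/2`-selectable batched OCRS. -/
theorem half_batched_OCRS_vertex_arrival {n : ℕ}
    (Ω : Fin n → Type) [∀ v, Fintype (Ω v)]
    (μ : ∀ v, Ω v → ℝ)
    (hμ0 : ∀ v o, 0 ≤ μ v o) (hμ1 : ∀ v, ∑ o, μ v o = 1)
    (Rv : ∀ v, Ω v → Finset (Fin n))
    (hRearlier : ∀ v o, ∀ u ∈ Rv v o, u < v)
    (hRcard : ∀ v o, (Rv v o).card ≤ 1)
    (x : Fin n → Fin n → ℝ)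
    (hxdef : ∀ u v : Fin n, u < v →
      x u v = ∑ o : Ω v, if u ∈ Rv v o then μ v o else 0)
    (hxsym : ∀ u v, x u v = x v u)
    (hxdiag : ∀ u, x u u = 0)
    (hxsum : ∀ w : Fin n, ∑ z ∈ Finset.univ.erase w, x w z ≤ 1) :
    (∀ u v : Fin n, u < v → vertexAlpha x u v ≤ 1) ∧
    (∀ q : (∀ v, Ω v) × (Fin n → Fin n → Bool),
      ∀ e ∈ vertexProcess Rv q.1 q.2 n, ∀ e' ∈ vertexProcess Rv q.1 q.2 n, e ≠ e' →
        e.1 ≠ e'.1 ∧ e.1 ≠ e'.2 ∧ e.2 ≠ e'.1 ∧ e.2 ≠ e'.2) ∧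
    (∀ u v : Fin n, u < v →
      prOf (vertexMass μ x) (fun q => (u, v) ∈ vertexProcess Rv q.1 q.2 n)
        = x u v / 2) ∧
    (∀ u v : Fin n, u < v →
      prOf (vertexMass μ x)
          (fun q => (u, v) ∈ vertexProcess Rv q.1 q.2 n ∧ Rv v (q.1 v) = {u})
        = (1 / 2) * prOf (vertexMass μ x) (fun q => Rv v (q.1 v) = {u})) := by
  have hx0 := hx_nonneg μ x Rv hμ0 hxdef hxsym hxdiag
  have hsle := hx_sum_le x hxdiag hxsum hx0
  have hmain : ∀ u v : Fin n, u < v →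
      prOf (vertexMass μ x) (fun q => unm u (vertexProcess Rv q.1 q.2 v.val) ∧
        Rv v (q.1 v) = {u} ∧ q.2 v u = true) = x u v / 2 := by
    intro u v huv
    have hdep : ∀ q q' : (∀ v, Ω v) × (Fin n → Fin n → Bool),
        (∀ z : Fin n, z < v → q.1 z = q'.1 z ∧ q.2 z = q'.2 z) →
        (unm u (vertexProcess Rv q.1 q.2 v.val) ↔ unm u (vertexProcess Rv q'.1 q'.2 v.val)) := by
      intro q q' hagree
      rw [vp_depends Rv q.1 q.2 q'.1 q'.2 v.val
        (fun z hz => (hagree z (Fin.lt_def.mpr hz)).1)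
        (fun z hz => (hagree z (Fin.lt_def.mpr hz)).2)]
    have e2 : prOf (vertexMass μ x) (fun q => unm u (vertexProcess Rv q.1 q.2 v.val) ∧
          Rv v (q.1 v) = {u} ∧ q.2 v u = true)
        = prOf (vertexMass μ x) (fun q => unm u (vertexProcess Rv q.1 q.2 v.val)) *
            (x u v * vertexAlpha x u v) := by
      rw [prOf_factor μ x Rv hμ1 v u _ hdep, hxR μ x Rv hRcard hxdef u v huv]
    have e3 := unm_prob μ x Rv hμ0 hμ1 hRcard hxdef hxsym hxdiag hxsum v.val
      (le_of_lt v.isLt) u (Fin.lt_def.mp huv)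
    have e4 : vertexAlpha x u v
        = 1 / (2 - ∑ z ∈ Finset.univ.filter (fun z : Fin n => z.val < v.val), x u z) :=
      halpha_gen x u v v.val (fun z => Fin.lt_def)
    rw [e2, e3, e4]
    have hSnn : 0 ≤ ∑ z ∈ Finset.univ.filter (fun z : Fin n => z.val < v.val), x u z :=
      Finset.sum_nonneg fun z _ => hx0 u z
    have hS1 : ∑ z ∈ Finset.univ.filter (fun z : Fin n => z.val < v.val), x u z ≤ 1 :=
      hsle u _
    have hne : (2 : ℝ) - ∑ z ∈ Finset.univ.filter (fun z : Fin n => z.val < v.val), x u z ≠ 0 := by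
      intro hh; linarith
    have key : ∀ S xv : ℝ, 2 - S ≠ 0 → (1 - 1/2 * S) * (xv * (1 / (2 - S))) = xv / 2 := by
      intro S xv hS
      field_simp
    exact key _ _ hne
  refine ⟨?_, ?_, ?_, ?_⟩
  · -- (a) α ≤ 1
    intro u v _
    have h1 : 0 ≤ ∑ z ∈ Finset.univ.filter (fun z : Fin n => z < v), x u z :=
      Finset.sum_nonneg fun z _ => hx0 u z
    have h2 := hsle u (Finset.univ.filter (fun z : Fin n => z < v))
    unfold vertexAlpha
    rw [div_le_one (by linarith)]
    linarith
  · -- matching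
    intro q
    exact vp_matching Rv q.1 q.2 n
  · -- (b)
    intro u v huv
    have e1 : prOf (vertexMass μ x) (fun q => (u, v) ∈ vertexProcess Rv q.1 q.2 n)
        = prOf (vertexMass μ x) (fun q => unm u (vertexProcess Rv q.1 q.2 v.val) ∧
            Rv v (q.1 v) = {u} ∧ q.2 v u = true) :=
      prOf_congr (vertexMass μ x)
        (P' := fun q => unm u (vertexProcess Rv q.1 q.2 v.val) ∧
          Rv v (q.1 v) = {u} ∧ q.2 v u = true)
        (fun q => by rw [vp_mem_iff Rv q.1 q.2 u v huv n v.isLt]; tauto)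
    rw [e1, hmain u v huv]
  · -- (c)
    intro u v huv
    have e1 : prOf (vertexMass μ x)
          (fun q => (u, v) ∈ vertexProcess Rv q.1 q.2 n ∧ Rv v (q.1 v) = {u})
        = prOf (vertexMass μ x) (fun q => unm u (vertexProcess Rv q.1 q.2 v.val) ∧
            Rv v (q.1 v) = {u} ∧ q.2 v u = true) :=
      prOf_congr (vertexMass μ x)
        (P' := fun q => unm u (vertexProcess Rv q.1 q.2 v.val) ∧
          Rv v (q.1 v) = {u} ∧ q.2 v u = true)
        (fun q => by rw [vp_mem_iff Rv q.1 q.2 u v huv n v.isLt]; tauto)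
    have e2 : prOf (vertexMass μ x) (fun q => Rv v (q.1 v) = {u}) = x u v := by
      rw [prOf_R μ x Rv hμ1 v u, hxR μ x Rv hRcard hxdef u v huv]
    rw [e1, hmain u v huv, e2]
    ring
end

section
/- LEMMA (key analytic inequality): let c ∈ [0, 1/2], let S be a finite index set, and let a, b : S → ℝ satisfy a_s ≥ 0, b_s ≥ 0 and a_s + b_s ≤ 1 for every s ∈ S, as well as ∑_{s∈S} a_s ≤ 1 and ∑_{s∈S} b_s ≤ 1. Write K = ((1−2c)/(1−c))². Then 1 − c·(∑_s a_s + ∑_s b_s) + c²·K·( (∑_s a_s)·(∑_s b_s) − ∑_s a_s b_s ) ≥ 1 − 2c + (c²/2)·K. -/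
/-- Key analytic inequality (Lemma 5.5 / `lem:lastfx` in the paper):
for `c ∈ [0, 1/2]` and nonnegative `a, b` with `a s + b s ≤ 1` pointwise and both sums at
most `1`, writing `K = ((1 - 2c)/(1 - c))^2`, we have
`1 - c (∑ a + ∑ b) + c² K ((∑ a)(∑ b) - ∑ a b) ≥ 1 - 2c + (c²/2) K`. -/
theorem key_analytic_inequality {S : Type*} [Fintype S] (c : ℝ)
    (hc0 : 0 ≤ c) (hc : c ≤ 1 / 2)
    (a b : S → ℝ)
    (ha : ∀ s, 0 ≤ a s) (hb : ∀ s, 0 ≤ b s) (hab : ∀ s, a s + b s ≤ 1)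
    (hsa : ∑ s, a s ≤ 1) (hsb : ∑ s, b s ≤ 1) :
    1 - c * ((∑ s, a s) + (∑ s, b s))
      + c ^ 2 * ((1 - 2 * c) / (1 - c)) ^ 2
        * ((∑ s, a s) * (∑ s, b s) - ∑ s, a s * b s)
      ≥ 1 - 2 * c + (c ^ 2 / 2) * ((1 - 2 * c) / (1 - c)) ^ 2 := by
  set A := ∑ s, a s with hA
  set B := ∑ s, b s with hB
  set P := ∑ s, a s * b s with hP
  have hA0 : 0 ≤ A := Finset.sum_nonneg fun s _ => ha s
  have hB0 : 0 ≤ B := Finset.sum_nonneg fun s _ => hb s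
  have hP0 : 0 ≤ P := Finset.sum_nonneg fun s _ => mul_nonneg (ha s) (hb s)
  have hPle : P ≤ (A + B) / 4 := by
    have h1 : P ≤ ∑ s, (a s + b s) / 4 := by
      apply Finset.sum_le_sum
      intro s _
      nlinarith [sq_nonneg (a s - b s), hab s, ha s, hb s]
    have h2 : ∑ s, (a s + b s) / 4 = (A + B) / 4 := by
      rw [hA, hB, ← Finset.sum_add_distrib, Finset.sum_div]
    linarith
  have h1c : (0:ℝ) < 1 - c := by linarith
  have hd1 : (1 - 2 * c) / (1 - c) ≤ 1 := by
    rw [div_le_one h1c]; linarith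
  have hd0 : 0 ≤ (1 - 2 * c) / (1 - c) := div_nonneg (by linarith) h1c.le
  set K := ((1 - 2 * c) / (1 - c)) ^ 2 with hK
  have hK0 : 0 ≤ K := sq_nonneg _
  have hK1 : K ≤ 1 := by nlinarith
  have hcK : c * K ≤ 1 / 2 := by nlinarith
  have hQ : 0 ≤ (A + B) / 4 - A * B + 1 / 2 := by nlinarith [mul_nonneg hA0 hB0]
  -- the bracket inequality
  have hbr : 0 ≤ (2 - A - B) - c * K * ((A + B) / 4 - A * B + 1 / 2) := by
    nlinarith [mul_nonneg (mul_nonneg hc0 hK0) hQ,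
      mul_nonneg (sub_nonneg.2 hsa) (sub_nonneg.2 hsb),
      mul_le_of_le_one_left hQ (by linarith : c * K ≤ 1)]
  nlinarith [mul_nonneg hc0 hbr, mul_nonneg (mul_nonneg hc0 hc0) hK0,
    mul_nonneg (mul_nonneg (mul_nonneg hc0 hc0) hK0) (sub_nonneg.2 hPle)]
end

section
/- PROPOSITION (3/7 upper bound against the fractional optimum, edge arrival): consider the 6-vertex graph on vertices a,b,c,d,e,f whose edge set consists of the two triangles {ab, bc, ac} and {de, ef, df}, each of deterministic weight 1, together with the nine 'big' edges joining {a,b,c} to {d,e,f}, whose weights are independent random variables equal to 1/(4ε) with probability ε and 0 otherwise, for a parameter ε ∈ (0, 1/9]. The edges arrive online with the six weight-1 edges first (in any order) followed by the nine big edges (in any order). Then: (i) every online matching algorithm for this instance has expected total matched weight at most 9/4; and (ii) the expected value of the optimal fractional matching satisfies E[w(f-OPT(w))] ≥ 21/4 − 36ε. Consequently, for every δ > 0 there is ε > 0 such that no online algorithm achieves expected value more than (3/7 + δ)·E[w(f-OPT(w))]. -/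
open Finset

/-- The edges of the 6-vertex instance: vertices `a,…,f` are `0,…,5`; edges `0,…,5` are
the two triangles `{ab, bc, ac}` and `{de, ef, df}`, and edges `6,…,14` are the nine
"big" edges joining `{a,b,c}` to `{d,e,f}`. -/
def ends8 : Fin 15 → Fin 6 × Fin 6 :=
  ![(0, 1), (1, 2), (0, 2), (3, 4), (4, 5), (3, 5),
    (0, 3), (0, 4), (0, 5), (1, 3), (1, 4), (1, 5), (2, 3), (2, 4), (2, 5)]

/-- The mass function of the random instance: the six triangle edges are deterministic
(indicator forced to `true`), the nine big edges are independently realized with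
probability `ε`. -/
noncomputable def mass8 (ε : ℝ) (ω : Fin 15 → Bool) : ℝ :=
  ∏ i : Fin 15,
    if (i : ℕ) < 6 then (if ω i then 1 else 0) else (if ω i then ε else 1 - ε)

/-- Edge weights: triangle edges have weight `1`; each big edge has weight `1/(4ε)` if
realized and `0` otherwise. -/
noncomputable def w8 (ε : ℝ) (ω : Fin 15 → Bool) (i : Fin 15) : ℝ :=
  if (i : ℕ) < 6 then 1 else if ω i then 1 / (4 * ε) else 0

/-- The value `w(f-OPT(w))` of the optimal fractional matching for weights `wt`. -/
noncomputable def fracOptVal8 (wt : Fin 15 → ℝ) : ℝ :=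
  sSup {r : ℝ | ∃ y : Fin 15 → ℝ, (∀ i, 0 ≤ y i) ∧
    (∀ v : Fin 6,
      ∑ i ∈ Finset.univ.filter (fun i => (ends8 i).1 = v ∨ (ends8 i).2 = v), y i ≤ 1) ∧
    r = ∑ i, wt i * y i}

/-- The selected edge set is a matching. -/
def IsMatchingSel8 (A : Finset (Fin 15)) : Prop :=
  ∀ i ∈ A, ∀ j ∈ A, i ≠ j →
    (ends8 i).1 ≠ (ends8 j).1 ∧ (ends8 i).1 ≠ (ends8 j).2 ∧
    (ends8 i).2 ≠ (ends8 j).1 ∧ (ends8 i).2 ≠ (ends8 j).2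

/-- `A` is an online algorithm for the arrival order `ord`: whether the edge arriving at
time `k` is selected depends only on the algorithm's internal randomness and the
realizations of the edges arriving at times `≤ k`. -/
def IsOnline8 (ord : Equiv.Perm (Fin 15)) {Θ : Type}
    (A : Θ → (Fin 15 → Bool) → Finset (Fin 15)) : Prop :=
  ∀ (θ : Θ) (ω ω' : Fin 15 → Bool) (k : Fin 15),
    (∀ l : Fin 15, l ≤ k → ω (ord l) = ω' (ord l)) →
    (ord k ∈ A θ ω ↔ ord k ∈ A θ ω')

/-- Expected total matched weight of the (randomized) algorithm `A` with internal
randomness distributed according to `ν`. -/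
noncomputable def algVal8 (ε : ℝ) {Θ : Type} [Fintype Θ] (ν : Θ → ℝ)
    (A : Θ → (Fin 15 → Bool) → Finset (Fin 15)) : ℝ :=
  expOf (fun q : (Fin 15 → Bool) × Θ => mass8 ε q.1 * ν q.2)
    (fun q => ∑ i ∈ A q.2 q.1, w8 ε q.1 i)

/-!
On the instance, the triangle edges are present with probability one and arrive first, so the
triangle edges an online algorithm keeps form a fixed matching `T`, chosen before any big edge
is seen. Each kept triangle edge costs the four big edges meeting it, and a check of the few
matchings of the two triangles gives `4 |T| + #(big edges still available) ≤ 9`; since each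
big edge is worth `1/(4ε)` with probability `ε`, the algorithm collects at most
`|T| + #(available)/4 ≤ 9/4`. The fractional optimum is at least `3` (half of every triangle
edge) and at least `1/(4ε)` as soon as one big edge is realized, which happens with
probability `1 - (1-ε)^9 ≥ 9ε - 36ε²`; so the ratio tends to `(9/4) / (21/4) = 3/7`.
-/

section Expectation

variable {Ω : Type*} [Fintype Ω] (mass : Ω → ℝ)

lemma expOf_add (f g : Ω → ℝ) :
    expOf mass (fun ω => f ω + g ω) = expOf mass f + expOf mass g := by
  simp only [expOf, mul_add, sum_add_distrib]

lemma expOf_const_mul (c : ℝ) (f : Ω → ℝ) :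
    expOf mass (fun ω => c * f ω) = c * expOf mass f := by
  simp only [expOf, mul_sum]
  exact sum_congr rfl fun _ _ => mul_left_comm _ _ _

lemma expOf_finset_sum {ι : Type*} (s : Finset ι) (f : ι → Ω → ℝ) :
    expOf mass (fun ω => ∑ i ∈ s, f i ω) = ∑ i ∈ s, expOf mass (f i) := by
  simp only [expOf, mul_sum]
  exact sum_comm

variable {mass}

lemma expOf_const (hmass : ∑ ω, mass ω = 1) (c : ℝ) : expOf mass (fun _ => c) = c := by
  rw [expOf, ← sum_mul, hmass, one_mul]

lemma expOf_mono (hmass : ∀ ω, 0 ≤ mass ω) {f g : Ω → ℝ}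
    (hfg : ∀ ω, mass ω ≠ 0 → f ω ≤ g ω) : expOf mass f ≤ expOf mass g := by
  refine sum_le_sum fun ω _ => ?_
  rcases eq_or_ne (mass ω) 0 with h | h
  · simp [h]
  · exact mul_le_mul_of_nonneg_left (hfg ω h) (hmass ω)

end Expectation

section Law

variable {ε : ℝ}

/-- The law of the indicator of edge `i`: `mass8 ε ω = ∏ i, edgeLaw ε i (ω i)`. -/
noncomputable def edgeLaw (ε : ℝ) (i : Fin 15) (b : Bool) : ℝ :=
  if (i : ℕ) < 6 then (if b then 1 else 0) else (if b then ε else 1 - ε)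

lemma sum_edgeLaw (ε : ℝ) (i : Fin 15) : ∑ b, edgeLaw ε i b = 1 := by
  unfold edgeLaw
  split_ifs <;> simp

lemma expOf_mass8_prod (ε : ℝ) (g : Fin 15 → Bool → ℝ) :
    expOf (mass8 ε) (fun ω => ∏ i, g i (ω i)) = ∏ i, ∑ b, edgeLaw ε i b * g i b := by
  rw [Fintype.prod_sum]
  simp only [expOf, mass8, ← prod_mul_distrib]
  rfl

lemma sum_mass8 (ε : ℝ) : ∑ ω, mass8 ε ω = 1 := by
  simpa only [expOf, prod_const_one, mul_one, sum_edgeLaw] using expOf_mass8_prod ε fun _ _ => 1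

lemma mass8_nonneg (hε : 0 ≤ ε) (hε1 : ε ≤ 1) (ω : Fin 15 → Bool) : 0 ≤ mass8 ε ω :=
  prod_nonneg fun i _ => by
    split_ifs <;> linarith

lemma eq_true_of_mass8_ne_zero {ω : Fin 15 → Bool} (h : mass8 ε ω ≠ 0) {i : Fin 15}
    (hi : (i : ℕ) < 6) : ω i = true := by
  by_contra hω
  exact h (prod_eq_zero (mem_univ i) (by simp [hi, hω]))

lemma expOf_indicator_big (ε : ℝ) {j : Fin 15} (hj : 6 ≤ (j : ℕ)) :
    expOf (mass8 ε) (fun ω => if ω j then 1 else 0) = ε := by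
  have hprod : ∀ ω : Fin 15 → Bool, (if ω j then 1 else 0 : ℝ)
      = ∏ i, if i = j then (if ω i then 1 else 0) else 1 := fun ω => by
    rw [prod_ite_eq' univ j, if_pos (mem_univ j)]
  have hfactor : ∀ i, ∑ b, edgeLaw ε i b * (if i = j then (if b then 1 else 0) else 1)
      = if i = j then ε else 1 := fun i => by
    split_ifs with hij
    · simp [hij, edgeLaw, hj]
    · simp only [mul_one, sum_edgeLaw]
  rw [funext hprod, expOf_mass8_prod ε fun i b => if i = j then (if b then 1 else 0) else 1]
  simp only [hfactor, prod_ite_eq' univ j, mem_univ, if_true]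

def NoBigEdge (ω : Fin 15 → Bool) : Prop :=
  ∀ i : Fin 15, 6 ≤ (i : ℕ) → ω i = false

instance : DecidablePred NoBigEdge := fun ω => by
  unfold NoBigEdge
  infer_instance

lemma expOf_indicator_noBigEdge (ε : ℝ) :
    expOf (mass8 ε) (fun ω => if NoBigEdge ω then 1 else 0) = (1 - ε) ^ 9 := by
  have hprod : ∀ ω : Fin 15 → Bool, (if NoBigEdge ω then 1 else 0 : ℝ)
      = ∏ i : Fin 15, if 6 ≤ (i : ℕ) → ω i = false then 1 else 0 := fun ω => by
    simp only [prod_boole, NoBigEdge, mem_univ, true_implies]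
  have hfactor : ∀ i : Fin 15,
      ∑ b, edgeLaw ε i b * (if 6 ≤ (i : ℕ) → b = false then 1 else 0)
        = if (i : ℕ) < 6 then 1 else 1 - ε := fun i => by
    by_cases hi : (i : ℕ) < 6
    · simp [edgeLaw, hi, Nat.not_le.mpr hi]
    · simp [edgeLaw, hi, Nat.le_of_not_lt hi]
  rw [funext hprod,
    expOf_mass8_prod ε fun i b => if 6 ≤ (i : ℕ) → b = false then 1 else 0]
  simp only [hfactor, prod_ite, prod_const_one, one_mul, prod_const]
  rfl

end Law

section Matching

lemma IsMatchingSel8.mono {S T : Finset (Fin 15)} (hT : IsMatchingSel8 T) (hST : S ⊆ T) :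
    IsMatchingSel8 S :=
  fun i hi j hj hij => hT i (hST hi) j (hST hj) hij

instance : DecidablePred IsMatchingSel8 := fun S => by
  unfold IsMatchingSel8
  infer_instance

def trianglePart (S : Finset (Fin 15)) : Finset (Fin 15) :=
  S.filter fun i => (i : ℕ) < 6

def bigExtensions (T : Finset (Fin 15)) : Finset (Fin 15) :=
  univ.filter fun i => 6 ≤ (i : ℕ) ∧ IsMatchingSel8 (insert i T)

-- Indexed by `Fin 6` so that `decide` only runs over the `2⁶` sets of triangle edges.
lemma four_mul_card_add_card_bigExtensions_map_le :
    ∀ s : Finset (Fin 6), IsMatchingSel8 (s.map (Fin.castLEEmb (by norm_num))) →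
      4 * #s + #(bigExtensions (s.map (Fin.castLEEmb (by norm_num)))) ≤ 9 := by
  decide

lemma four_mul_card_trianglePart_add_card_bigExtensions_le {S : Finset (Fin 15)}
    (hS : IsMatchingSel8 S) : 4 * #(trianglePart S) + #(bigExtensions (trianglePart S)) ≤ 9 := by
  set s : Finset (Fin 6) := univ.filter fun j => Fin.castLE (by norm_num) j ∈ trianglePart S
  have hs : s.map (Fin.castLEEmb (by norm_num)) = trianglePart S := by
    ext i
    simp only [s, mem_map, mem_filter, mem_univ, true_and, Fin.castLEEmb_apply]
    refine ⟨fun ⟨j, hj, hji⟩ => hji ▸ hj, fun hi => ⟨⟨i, (mem_filter.mp hi).2⟩, hi, rfl⟩⟩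
  rw [← hs, card_map]
  exact four_mul_card_add_card_bigExtensions_map_le s (hs ▸ hS.mono (filter_subset _ S))

lemma w8_nonneg {ε : ℝ} (hε : 0 ≤ ε) (ω : Fin 15 → Bool) (i : Fin 15) : 0 ≤ w8 ε ω i := by
  unfold w8
  split_ifs <;> positivity

lemma sum_w8_le_of_isMatchingSel8 {ε : ℝ} (hε : 0 ≤ ε) (ω : Fin 15 → Bool)
    {S : Finset (Fin 15)} (hS : IsMatchingSel8 S) :
    ∑ i ∈ S, w8 ε ω i ≤
      #(trianglePart S) + ∑ i ∈ bigExtensions (trianglePart S), w8 ε ω i := by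
  rw [← sum_filter_add_sum_filter_not S fun i : Fin 15 => (i : ℕ) < 6]
  gcongr ?_ + ?_
  · rw [card_eq_sum_ones, Nat.cast_sum, Nat.cast_one]
    exact (sum_congr rfl fun i hi => if_pos (mem_filter.mp hi).2).le
  · refine sum_le_sum_of_subset_of_nonneg (fun i hi => ?_) fun i _ _ => w8_nonneg hε ω i
    obtain ⟨hiS, hi6⟩ := mem_filter.mp hi
    refine mem_filter.mpr ⟨mem_univ i, Nat.le_of_not_lt hi6, hS.mono ?_⟩
    exact insert_subset hiS (filter_subset _ S)

end Matching

section Online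

variable {ε : ℝ}

lemma expOf_w8_big (hε : ε ≠ 0) {j : Fin 15} (hj : 6 ≤ (j : ℕ)) :
    expOf (mass8 ε) (fun ω => w8 ε ω j) = 1 / 4 := by
  have hw : (fun ω => w8 ε ω j) = fun ω => 1 / (4 * ε) * (if ω j then 1 else 0) := by
    ext ω
    simp [w8, Nat.not_lt.mpr hj]
  rw [hw, expOf_const_mul, expOf_indicator_big ε hj]
  field_simp

lemma trianglePart_eq_of_isOnline8 {ord : Equiv.Perm (Fin 15)}
    (hord : ∀ k : Fin 15, (k : ℕ) < 6 ↔ ((ord k : ℕ) < 6)) {Θ : Type}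
    {A : Θ → (Fin 15 → Bool) → Finset (Fin 15)} (hO : IsOnline8 ord A) (θ : Θ)
    {ω ω' : Fin 15 → Bool} (h : ∀ i : Fin 15, (i : ℕ) < 6 → ω i = ω' i) :
    trianglePart (A θ ω) = trianglePart (A θ ω') := by
  ext i
  simp only [trianglePart, mem_filter]
  refine and_congr_left fun hi => ?_
  have hk : ((ord.symm i : Fin 15) : ℕ) < 6 := (hord _).mpr (by rwa [Equiv.apply_symm_apply])
  simpa only [Equiv.apply_symm_apply] using
    hO θ ω ω' (ord.symm i) fun l hl => h _ ((hord l).mp (lt_of_le_of_lt hl hk))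

lemma expOf_sum_w8_le (hε : 0 < ε) (hε1 : ε ≤ 1) {S : (Fin 15 → Bool) → Finset (Fin 15)}
    (hS : ∀ ω, IsMatchingSel8 (S ω)) (ω₀ : Fin 15 → Bool)
    (hT : ∀ ω, mass8 ε ω ≠ 0 → trianglePart (S ω) = trianglePart (S ω₀)) :
    expOf (mass8 ε) (fun ω => ∑ i ∈ S ω, w8 ε ω i) ≤ 9 / 4 := by
  set T := trianglePart (S ω₀)
  have hcount := four_mul_card_trianglePart_add_card_bigExtensions_le (hS ω₀)
  calc expOf (mass8 ε) (fun ω => ∑ i ∈ S ω, w8 ε ω i)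
      ≤ expOf (mass8 ε) (fun ω => #T + ∑ i ∈ bigExtensions T, w8 ε ω i) :=
        expOf_mono (mass8_nonneg hε.le hε1) fun ω hω =>
          hT ω hω ▸ sum_w8_le_of_isMatchingSel8 hε.le ω (hS ω)
    _ = #T + #(bigExtensions T) * (1 / 4) := by
        rw [expOf_add, expOf_const (sum_mass8 ε), expOf_finset_sum,
          sum_congr rfl fun i hi => expOf_w8_big hε.ne' (mem_filter.mp hi).2.1,
          sum_const, nsmul_eq_mul]
    _ ≤ 9 / 4 := by
        have : (4 * #T + #(bigExtensions T) : ℝ) ≤ 9 := by exact_mod_cast hcount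
        linarith

lemma algVal8_eq_sum {Θ : Type} [Fintype Θ] (ν : Θ → ℝ)
    (A : Θ → (Fin 15 → Bool) → Finset (Fin 15)) :
    algVal8 ε ν A = ∑ θ, ν θ * expOf (mass8 ε) (fun ω => ∑ i ∈ A θ ω, w8 ε ω i) := by
  rw [algVal8, expOf, Fintype.sum_prod_type, sum_comm]
  refine sum_congr rfl fun θ _ => ?_
  rw [expOf, mul_sum]
  exact sum_congr rfl fun ω _ => by ring

lemma algVal8_le_nine_fourths (hε : 0 < ε) (hε1 : ε ≤ 1) {ord : Equiv.Perm (Fin 15)}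
    (hord : ∀ k : Fin 15, (k : ℕ) < 6 ↔ ((ord k : ℕ) < 6)) {Θ : Type} [Fintype Θ] {ν : Θ → ℝ}
    (hν : ∀ θ, 0 ≤ ν θ) (hν1 : ∑ θ, ν θ = 1) {A : Θ → (Fin 15 → Bool) → Finset (Fin 15)}
    (hM : ∀ θ ω, IsMatchingSel8 (A θ ω)) (hO : IsOnline8 ord A) :
    algVal8 ε ν A ≤ 9 / 4 := by
  have hθ : ∀ θ, expOf (mass8 ε) (fun ω => ∑ i ∈ A θ ω, w8 ε ω i) ≤ 9 / 4 := fun θ =>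
    expOf_sum_w8_le hε hε1 (hM θ) (fun _ => true) fun ω hω =>
      trianglePart_eq_of_isOnline8 hord hO θ fun i hi => eq_true_of_mass8_ne_zero hω hi
  calc algVal8 ε ν A ≤ ∑ θ, ν θ * (9 / 4) := by
        rw [algVal8_eq_sum]
        exact sum_le_sum fun θ _ => mul_le_mul_of_nonneg_left (hθ θ) (hν θ)
    _ = 9 / 4 := by rw [← sum_mul, hν1, one_mul]

end Online

section FractionalOptimum

variable {ε : ℝ}

lemma le_fracOptVal8 {wt : Fin 15 → ℝ} (hwt : ∀ i, 0 ≤ wt i) {y : Fin 15 → ℝ}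
    (hy : ∀ i, 0 ≤ y i)
    (hyv : ∀ v : Fin 6,
      ∑ i ∈ Finset.univ.filter (fun i => (ends8 i).1 = v ∨ (ends8 i).2 = v), y i ≤ 1) :
    ∑ i, wt i * y i ≤ fracOptVal8 wt := by
  refine le_csSup ⟨∑ i, wt i, ?_⟩ ⟨y, hy, hyv, rfl⟩
  rintro _ ⟨z, hz, hzv, rfl⟩
  have hz1 : ∀ i, z i ≤ 1 := fun i =>
    (single_le_sum (fun j _ => hz j) (by simp)).trans (hzv (ends8 i).1)
  simpa using sum_le_sum fun i _ => mul_le_mul_of_nonneg_left (hz1 i) (hwt i)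

lemma apply_le_fracOptVal8 {wt : Fin 15 → ℝ} (hwt : ∀ i, 0 ≤ wt i) (j : Fin 15) :
    wt j ≤ fracOptVal8 wt := by
  have h := le_fracOptVal8 hwt (y := fun i => if i = j then 1 else 0)
    (fun i => by positivity) fun v => by
      rw [sum_ite_eq' _ j fun _ => (1 : ℝ)]
      split_ifs <;> norm_num
  simpa using h

lemma three_le_fracOptVal8_w8 (hε : 0 ≤ ε) (ω : Fin 15 → Bool) : 3 ≤ fracOptVal8 (w8 ε ω) := by
  have h := le_fracOptVal8 (w8_nonneg hε ω) (y := fun i => if (i : ℕ) < 6 then 1 / 2 else 0)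
    (fun i => by positivity) fun v => by
      rw [sum_filter]
      fin_cases v <;> simp [Fin.sum_univ_succ, ends8] <;> norm_num
  simp only [w8, Fin.sum_univ_succ] at h
  norm_num at h
  exact h

lemma ite_noBigEdge_le_fracOptVal8_w8 (hε : 0 ≤ ε) (ω : Fin 15 → Bool) :
    (if NoBigEdge ω then 3 else 1 / (4 * ε)) ≤ fracOptVal8 (w8 ε ω) := by
  split_ifs with h
  · exact three_le_fracOptVal8_w8 hε ω
  · obtain ⟨j, hj, hωj⟩ : ∃ j : Fin 15, 6 ≤ (j : ℕ) ∧ ω j = true := by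
      simpa [NoBigEdge] using h
    simpa [w8, Nat.not_lt.mpr hj, hωj] using apply_le_fracOptVal8 (w8_nonneg hε ω) j

lemma le_expOf_fracOptVal8_w8 (hε : 0 ≤ ε) (hε1 : ε ≤ 1) :
    3 * (1 - ε) ^ 9 + (1 - (1 - ε) ^ 9) / (4 * ε)
      ≤ expOf (mass8 ε) (fun ω => fracOptVal8 (w8 ε ω)) :=
  calc 3 * (1 - ε) ^ 9 + (1 - (1 - ε) ^ 9) / (4 * ε)
      = expOf (mass8 ε)
          (fun ω => (3 - 1 / (4 * ε)) * (if NoBigEdge ω then 1 else 0) + 1 / (4 * ε)) := by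
        rw [expOf_add, expOf_const_mul, expOf_indicator_noBigEdge, expOf_const (sum_mass8 ε)]
        ring
    _ ≤ expOf (mass8 ε) (fun ω => fracOptVal8 (w8 ε ω)) :=
        expOf_mono (mass8_nonneg hε hε1) fun ω _ => by
          refine le_trans (le_of_eq ?_) (ite_noBigEdge_le_fracOptVal8_w8 hε ω)
          split_ifs <;> ring

lemma one_sub_pow_nine_le (hε : 0 ≤ ε) (hε1 : ε ≤ 2 / 3) :
    (1 - ε) ^ 9 ≤ 1 - 9 * ε + 36 * ε ^ 2 := by
  have h : 1 - 9 * ε + 36 * ε ^ 2 - (1 - ε) ^ 9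
      = ε ^ 3 * (84 - 126 * ε) + ε ^ 5 * (126 - 84 * ε) + ε ^ 7 * (36 - 9 * ε) + ε ^ 9 := by
    ring
  have : 0 ≤ ε ^ 3 * (84 - 126 * ε) + ε ^ 5 * (126 - 84 * ε) + ε ^ 7 * (36 - 9 * ε) + ε ^ 9 := by
    have : 0 ≤ 84 - 126 * ε := by linarith
    have : 0 ≤ 126 - 84 * ε := by linarith
    have : 0 ≤ 36 - 9 * ε := by linarith
    positivity
  linarith

lemma sub_le_three_mul_add_div (hε : 0 < ε) (hε1 : ε ≤ 2 / 3) :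
    21 / 4 - 36 * ε ≤ 3 * (1 - ε) ^ 9 + (1 - (1 - ε) ^ 9) / (4 * ε) := by
  set Q := (1 - ε) ^ 9
  have hQ_lower : 1 - 9 * ε ≤ Q := by
    have h := one_add_mul_le_pow (a := -ε) (by linarith) 9
    rw [← sub_eq_add_neg] at h
    push_cast at h
    linarith
  have hQ_upper := one_sub_pow_nine_le hε.le hε1
  rw [← sub_nonneg]
  have h : 3 * Q + (1 - Q) / (4 * ε) - (21 / 4 - 36 * ε)
      = ((1 - 9 * ε + 36 * ε ^ 2 - Q) + 12 * ε * (Q - (1 - 9 * ε))) / (4 * ε) := by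
    field_simp
    ring
  rw [h]
  have : 0 ≤ 12 * ε * (Q - (1 - 9 * ε)) := mul_nonneg (by positivity) (by linarith)
  exact div_nonneg (by linarith) (by positivity)

lemma sub_le_expOf_fracOptVal8_w8 (hε : 0 < ε) (hε1 : ε ≤ 2 / 3) :
    21 / 4 - 36 * ε ≤ expOf (mass8 ε) (fun ω => fracOptVal8 (w8 ε ω)) :=
  (sub_le_three_mul_add_div hε hε1).trans (le_expOf_fracOptVal8_w8 hε.le (by linarith))

end FractionalOptimum

lemma exists_nine_fourths_le_mul {δ : ℝ} (hδ : 0 < δ) :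
    ∃ ε : ℝ, 0 < ε ∧ ε ≤ 1 / 9 ∧ 9 / 4 ≤ (3 / 7 + δ) * (21 / 4 - 36 * ε) := by
  refine ⟨min (1 / 9) (δ / 48), by positivity, min_le_left _ _, ?_⟩
  have h9 := min_le_left (1 / 9 : ℝ) (δ / 48)
  have h48 := min_le_right (1 / 9 : ℝ) (δ / 48)
  nlinarith [mul_le_mul_of_nonneg_left h9 hδ.le]

/-- Upper bound of `3/7` against the fractional optimum for matching prophet inequality
with edge arrival (Proposition 6.1 in the paper): on the 6-vertex instance above, with
the six triangle edges arriving (in any order) before the nine big edges,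
(i) every online matching algorithm has expected matched weight at most `9/4`;
(ii) the expected optimal fractional matching value is at least `21/4 - 36ε`;
(iii) hence for every `δ > 0` there is `ε > 0` such that no online algorithm gets more
than `(3/7 + δ)` times the expected optimal fractional matching value. -/
theorem upper_bound_three_sevenths_fractional :
    (∀ ε : ℝ, 0 < ε → ε ≤ 1 / 9 →
      ∀ ord : Equiv.Perm (Fin 15), (∀ k : Fin 15, (k : ℕ) < 6 ↔ ((ord k : ℕ) < 6)) →
      ∀ (Θ : Type) [Fintype Θ], ∀ ν : Θ → ℝ, (∀ θ, 0 ≤ ν θ) → (∑ θ, ν θ = 1) →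
      ∀ A : Θ → (Fin 15 → Bool) → Finset (Fin 15),
        (∀ θ ω, IsMatchingSel8 (A θ ω)) → IsOnline8 ord A →
        algVal8 ε ν A ≤ 9 / 4) ∧
    (∀ ε : ℝ, 0 < ε → ε ≤ 1 / 9 →
      expOf (mass8 ε) (fun ω => fracOptVal8 (w8 ε ω)) ≥ 21 / 4 - 36 * ε) ∧
    (∀ δ : ℝ, 0 < δ → ∃ ε : ℝ, 0 < ε ∧ ε ≤ 1 / 9 ∧
      ∀ ord : Equiv.Perm (Fin 15), (∀ k : Fin 15, (k : ℕ) < 6 ↔ ((ord k : ℕ) < 6)) →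
      ∀ (Θ : Type) [Fintype Θ], ∀ ν : Θ → ℝ, (∀ θ, 0 ≤ ν θ) → (∑ θ, ν θ = 1) →
      ∀ A : Θ → (Fin 15 → Bool) → Finset (Fin 15),
        (∀ θ ω, IsMatchingSel8 (A θ ω)) → IsOnline8 ord A →
        algVal8 ε ν A ≤ (3 / 7 + δ) * expOf (mass8 ε) (fun ω => fracOptVal8 (w8 ε ω))) := by
  refine ⟨fun ε hε hε9 _ hord _ _ _ hν hν1 _ hM hO =>
      algVal8_le_nine_fourths hε (by linarith) hord hν hν1 hM hO,
    fun ε hε hε9 => sub_le_expOf_fracOptVal8_w8 hε (by linarith), fun δ hδ => ?_⟩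
  obtain ⟨ε, hε, hε9, hgap⟩ := exists_nine_fourths_le_mul hδ
  refine ⟨ε, hε, hε9, fun _ hord _ _ _ hν hν1 _ hM hO => ?_⟩
  calc _ ≤ 9 / 4 := algVal8_le_nine_fourths hε (by linarith) hord hν hν1 hM hO
    _ ≤ (3 / 7 + δ) * (21 / 4 - 36 * ε) := hgap
    _ ≤ _ := mul_le_mul_of_nonneg_left
        (sub_le_expOf_fracOptVal8_w8 hε (by linarith)) (by positivity)
end
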